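/- arXiv:2506.02947 — 7 statements merged into one kernel-verified Lean document; each statement's English description precedes it below -/
import Mathlib

section
/- Let p be a prime and ω = exp(2πi/p). Then every square submatrix of the p×p Fourier matrix F_p = (ω^{jm})_{j,m=0,...,p-1} has nonzero determinant. -/
/-!
Work in `R = ℤ[X]/(Φ_p) ≅ ℤ[ζ]`, a Noetherian domain embedded in `ℂ` by `ζ ↦ ω`, whose
reduction modulo `ζ - 1` is `𝔽_p` with `ζ ↦ 1`. Suppose a vector `a ∈ Rᵏ` is killed by the
submatrix `(ζ ^ (rᵢ cⱼ))`. Then `P(Y) = ∑ aⱼ Y^cⱼ` vanishes at the `k` distinct points `ζ ^ rᵢ`,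
so `∏ (Y - ζ ^ rᵢ)` divides `P`; reducing modulo `ζ - 1` gives `(Y - 1)ᵏ ∣ ∑ āⱼ Y^cⱼ` in
`𝔽_p[Y]`, and since the exponents `cⱼ < p` are distinct in `𝔽_p` this forces every `āⱼ = 0`.
Hence `ζ - 1` divides `a`, the quotient is again in the kernel, and iterating puts `a` in
`⋂ₙ (ζ - 1)ⁿ R = 0` (Krull). A square matrix over a domain with trivial kernel has nonzero
determinant.
-/

open Polynomial Finset Matrix

namespace Polynomial

variable {R : Type*}

theorem X_mul_derivative_C_mul_X_pow [CommSemiring R] (b : R) (n : ℕ) :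
    X * derivative (C b * X ^ n) = C (b * n) * X ^ n := by
  cases n with
  | zero => simp
  | succ n => rw [derivative_C_mul_X_pow, Nat.add_sub_cancel, mul_left_comm, ← pow_succ']

theorem iterate_X_mul_derivative_sum_C_mul_X_pow [CommSemiring R] {ι : Type*} (s : Finset ι)
    (a : ι → R) (e : ι → ℕ) (m : ℕ) :
    (fun f => X * derivative f)^[m] (∑ j ∈ s, C (a j) * X ^ e j) =
      ∑ j ∈ s, C (a j * e j ^ m) * X ^ e j := by
  induction m with
  | zero => simp
  | succ m ih =>
    rw [Function.iterate_succ_apply', ih, derivative_sum, mul_sum]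
    refine sum_congr rfl fun j _ => ?_
    rw [X_mul_derivative_C_mul_X_pow, pow_succ, mul_assoc]

theorem pow_sub_dvd_iterate_X_mul_derivative_of_pow_dvd [CommSemiring R] {f q : R[X]} {n : ℕ}
    (m : ℕ) (h : q ^ n ∣ f) : q ^ (n - m) ∣ (fun f => X * derivative f)^[m] f := by
  induction m with
  | zero => simpa
  | succ m ih =>
    rw [Nat.sub_succ, Function.iterate_succ_apply']
    exact (pow_sub_one_dvd_derivative_of_pow_dvd ih).mul_left X

/-- The moments `∑ aⱼ eⱼ ^ m`, `m < k`, are the values at `1` of the iterates of `X * d/dX`,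
so they vanish; the Vandermonde matrix of the distinct `eⱼ` is invertible. -/
theorem eq_zero_of_X_sub_one_pow_dvd_sum [CommRing R] [IsDomain R] {k : ℕ} {e : Fin k → ℕ}
    (he : Function.Injective fun j => (e j : R)) {a : Fin k → R}
    (h : (X - 1) ^ k ∣ ∑ j, C (a j) * X ^ e j) : a = 0 := by
  have moments (m : Fin k) : ∑ j, a j * (e j : R) ^ (m : ℕ) = 0 := by
    obtain ⟨g, hg⟩ := pow_sub_dvd_iterate_X_mul_derivative_of_pow_dvd m h
    have := congrArg (eval 1) hg
    rw [iterate_X_mul_derivative_sum_C_mul_X_pow] at this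
    simpa [eval_finsetSum, zero_pow (Nat.sub_ne_zero_of_lt m.isLt)] using this
  exact Matrix.eq_zero_of_vecMul_eq_zero (Matrix.det_vandermonde_ne_zero_iff.mpr he)
    (_root_.funext moments)

theorem prod_X_sub_C_dvd_of_eval_eq_zero [CommRing R] [IsDomain R] {ι : Type*} [Fintype ι]
    {x : ι → R} (hx : Function.Injective x) {P : R[X]} (hP : ∀ i, P.eval (x i) = 0) :
    ∏ i, (X - C (x i)) ∣ P := by
  rcases eq_or_ne P 0 with rfl | hP0
  · exact dvd_zero _
  rw [prod_eq_multiset_prod, ← Function.comp_def (fun a => X - C a) x,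
    ← Multiset.map_map, Multiset.prod_X_sub_C_dvd_iff_le_roots hP0,
    Multiset.le_iff_subset (univ.nodup.map hx)]
  intro y hy
  obtain ⟨i, -, rfl⟩ := Multiset.mem_map.1 hy
  exact (mem_roots hP0).2 (hP i)

end Polynomial

theorem AdjoinRoot.root_sub_of_dvd_mk_sub_of_eval {R : Type*} [CommRing R] (f g : R[X]) (x : R) :
    root f - of f x ∣ mk f g - of f (g.eval x) := by
  simpa only [map_sub, mk_X, mk_C] using map_dvd (mk f) (X_sub_C_dvd_sub_C_eval (a := x) (p := g))

def fourierSubmatrix {R : Type*} [Monoid R] {p k : ℕ} (ζ : R) (r c : Fin k → Fin p) :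
    Matrix (Fin k) (Fin k) R :=
  Matrix.of fun i j => ζ ^ ((r i : ℕ) * (c j : ℕ))

section ResidueRing

variable {R F : Type*} [CommRing R] [IsDomain R] [CommRing F] [IsDomain F] {p k : ℕ} [CharP F p]
  {ζ : R} {r c : Fin k → Fin p}

theorem sub_one_dvd_of_fourierSubmatrix_mulVec_eq_zero (hζ : IsPrimitiveRoot ζ p) (χ : R →+* F)
    (hχ : RingHom.ker χ = Ideal.span {ζ - 1}) (hr : Function.Injective r)
    (hc : Function.Injective c) {a : Fin k → R} (ha : fourierSubmatrix ζ r c *ᵥ a = 0)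
    (j : Fin k) : ζ - 1 ∣ a j := by
  have hχζ : χ ζ = 1 := by
    rw [← sub_eq_zero, ← map_one χ, ← map_sub, ← RingHom.mem_ker, hχ]
    exact Ideal.mem_span_singleton_self _
  set P : R[X] := ∑ j, C (a j) * X ^ (c j : ℕ)
  have hroots : ∏ i, (X - C (ζ ^ (r i : ℕ))) ∣ P := by
    refine prod_X_sub_C_dvd_of_eval_eq_zero
      (fun i i' h => hr (Fin.ext (hζ.pow_inj (r i).isLt (r i').isLt h))) fun i => ?_
    have := congrFun ha i
    simp only [mulVec, dotProduct, fourierSubmatrix, of_apply, Pi.zero_apply] at this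
    simp only [P, eval_finsetSum, eval_mul, eval_C, eval_pow, eval_X, ← pow_mul]
    rw [← this]
    exact sum_congr rfl fun j _ => mul_comm _ _
  have hreduced : (X - 1) ^ k ∣ ∑ j, C (χ (a j)) * X ^ (c j : ℕ) := by
    simpa [P, Polynomial.map_prod, Polynomial.map_sum, hχζ] using Polynomial.map_dvd χ hroots
  have hcF : Function.Injective fun j => ((c j : ℕ) : F) := fun j j' h =>
    hc <| Fin.ext <|
      ((CharP.natCast_eq_natCast F p).1 h).eq_of_lt_of_lt (c j).isLt (c j').isLt
  rw [← Ideal.mem_span_singleton, ← hχ, RingHom.mem_ker]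
  exact congrFun (eq_zero_of_X_sub_one_pow_dvd_sum hcF hreduced) j

theorem fourierSubmatrix_mulVec_eq_zero [IsNoetherianRing R] (hζ : IsPrimitiveRoot ζ p)
    (χ : R →+* F) (hχ : RingHom.ker χ = Ideal.span {ζ - 1}) (hr : Function.Injective r)
    (hc : Function.Injective c) {a : Fin k → R} (ha : fourierSubmatrix ζ r c *ᵥ a = 0) :
    a = 0 := by
  have hζ1 : ζ - 1 ≠ 0 := by
    rintro h
    rw [sub_eq_zero.1 h, IsPrimitiveRoot.one_left_iff] at hζ
    subst hζ
    exact one_ne_zero (by exact_mod_cast CharP.cast_eq_zero F 1 : (1 : F) = 0)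
  have hpow (n : ℕ) :
      ∀ a : Fin k → R, fourierSubmatrix ζ r c *ᵥ a = 0 → ∀ j, (ζ - 1) ^ n ∣ a j := by
    induction n with
    | zero => simp
    | succ n ih =>
      intro a ha j
      choose b hb using sub_one_dvd_of_fourierSubmatrix_mulVec_eq_zero hζ χ hχ hr hc ha
      rw [show a = (ζ - 1) • b from _root_.funext hb, mulVec_smul, smul_eq_zero] at ha
      rw [hb j, pow_succ']
      exact mul_dvd_mul_left _ (ih b (ha.resolve_left hζ1) j)
  have hne : Ideal.span {ζ - 1} ≠ ⊤ := hχ ▸ RingHom.ker_ne_top χ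
  ext j
  rw [Pi.zero_apply, ← Ideal.mem_bot, ← Ideal.iInf_pow_eq_bot_of_isDomain _ hne, Ideal.mem_iInf]
  intro n
  rw [Ideal.span_singleton_pow, Ideal.mem_span_singleton]
  exact hpow n a ha j

theorem det_fourierSubmatrix_ne_zero [IsNoetherianRing R] (hζ : IsPrimitiveRoot ζ p)
    (χ : R →+* F) (hχ : RingHom.ker χ = Ideal.span {ζ - 1}) (hr : Function.Injective r)
    (hc : Function.Injective c) : (fourierSubmatrix ζ r c).det ≠ 0 := fun h => by
  obtain ⟨a, ha0, ha⟩ := exists_mulVec_eq_zero_iff.2 h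
  exact ha0 (fourierSubmatrix_mulVec_eq_zero hζ χ hχ hr hc ha)

end ResidueRing

section Cyclotomic

variable {p : ℕ}

noncomputable def cyclotomicReduction [Fact p.Prime] :
    AdjoinRoot (cyclotomic p ℤ) →+* ZMod p :=
  AdjoinRoot.lift (Int.castRingHom (ZMod p)) 1 (by simp [eval₂_at_one, eval_one_cyclotomic_prime])

theorem ker_cyclotomicReduction [Fact p.Prime] :
    RingHom.ker (cyclotomicReduction (p := p)) =
      Ideal.span {AdjoinRoot.root (cyclotomic p ℤ) - 1} := by
  have hp : AdjoinRoot.root (cyclotomic p ℤ) - 1 ∣ (p : AdjoinRoot (cyclotomic p ℤ)) := by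
    simpa [eval_one_cyclotomic_prime] using
      AdjoinRoot.root_sub_of_dvd_mk_sub_of_eval (cyclotomic p ℤ) (cyclotomic p ℤ) 1
  refine le_antisymm (fun x hx => ?_) ((Ideal.span_singleton_le_iff_mem _).2 ?_)
  · induction x using AdjoinRoot.induction_on with | ih g => ?_
    rw [RingHom.mem_ker, cyclotomicReduction, AdjoinRoot.lift_mk, eval₂_at_one, eq_intCast,
      ZMod.intCast_zmod_eq_zero_iff_dvd] at hx
    obtain ⟨t, ht⟩ := hx
    have := AdjoinRoot.root_sub_of_dvd_mk_sub_of_eval (cyclotomic p ℤ) g 1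
    rw [ht] at this
    simpa [Ideal.mem_span_singleton] using this.add (hp.mul_right t)
  · rw [RingHom.mem_ker, map_sub, cyclotomicReduction, AdjoinRoot.lift_root, map_one, sub_self]

variable {K : Type*} [Field K] [CharZero K] {ω : K}

theorem exists_injective_adjoinRoot_cyclotomic (hp : 0 < p) (hω : IsPrimitiveRoot ω p) :
    ∃ φ : AdjoinRoot (cyclotomic p ℤ) →+* K,
      Function.Injective φ ∧ φ (AdjoinRoot.root (cyclotomic p ℤ)) = ω := by
  rw [cyclotomic_eq_minpoly hω hp]
  have hroot : (minpoly ℤ ω).eval₂ (algebraMap ℤ K) ω = 0 := minpoly.aeval ℤ ω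
  refine ⟨AdjoinRoot.lift _ ω hroot, (injective_iff_map_eq_zero _).2 fun x hx => ?_,
    AdjoinRoot.lift_root hroot⟩
  induction x using AdjoinRoot.induction_on with | ih g => ?_
  rw [AdjoinRoot.lift_mk] at hx
  exact AdjoinRoot.mk_eq_zero.2 (minpoly.isIntegrallyClosed_dvd (hω.isIntegral hp) hx)

theorem det_fourierSubmatrix_ne_zero_of_prime (hp : p.Prime) (hω : IsPrimitiveRoot ω p) {k : ℕ}
    {r c : Fin k → Fin p} (hr : Function.Injective r) (hc : Function.Injective c) :
    (fourierSubmatrix ω r c).det ≠ 0 := by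
  have := Fact.mk hp
  obtain ⟨φ, hφ, hφω⟩ := exists_injective_adjoinRoot_cyclotomic hp.pos hω
  have : IsDomain (AdjoinRoot (cyclotomic p ℤ)) := hφ.isDomain φ
  have hζ : IsPrimitiveRoot (AdjoinRoot.root (cyclotomic p ℤ)) p :=
    (hφω ▸ hω).of_map_of_injective hφ
  have hmap : fourierSubmatrix ω r c = (fourierSubmatrix (AdjoinRoot.root _) r c).map φ := by
    ext i j
    simp [fourierSubmatrix, hφω]
  rw [hmap, ← RingHom.mapMatrix_apply, ← RingHom.map_det, map_ne_zero_iff _ hφ]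
  exact det_fourierSubmatrix_ne_zero hζ cyclotomicReduction ker_cyclotomicReduction hr hc

end Cyclotomic

theorem chebotarev_minors_nonzero
    (p : ℕ) (hp : p.Prime)
    (ω : ℂ) (hω : ω = Complex.exp (2 * Real.pi * Complex.I / p))
    (k : ℕ) (r c : Fin k → Fin p)
    (hr : Function.Injective r) (hc : Function.Injective c) :
    Matrix.det (fun i j : Fin k => ω ^ ((r i : ℕ) * (c j : ℕ))) ≠ 0 := by
  subst hω
  exact det_fourierSubmatrix_ne_zero_of_prime hp (Complex.isPrimitiveRoot_exp p hp.ne_zero) hr hc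
end

section
/- For an index set A = {a_1 < a_2 < ... < a_k} ⊆ {0,1,...,n−1}, the Schur polynomial s_A(x_1,...,x_k) = det((x_j^{a_i})_{i,j}) / ∏_{1≤i<j≤k}(x_j − x_i) has nonnegative integer coefficients. -/
/-!
Induct on the number of variables, splitting off `t = x 0`. Subtracting `t ^ (a (i+1) - a i)`
times row `i` from row `i + 1` of `(x j ^ a i)` clears the first column below `t ^ a 0`, and
every remaining entry factors as
`x ^ a (i+1) - x ^ a i * t ^ (a (i+1) - a i) = (x - t) * ∑_{a i ≤ e < a (i+1)} t ^ (a (i+1) - 1 - e) * x ^ e`.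
Expanding the determinant multilinearly in the rows gives
`det (x j ^ a i) = t ^ a 0 * ∏ j, (x (j+1) - t) * ∑_e (∏ i, t ^ (a (i+1) - 1 - e i)) * det (x (j+1) ^ e i)`
over the interlacing `a 0 ≤ e 0 < a 1 ≤ e 1 < ⋯`, so by induction the quotient lies in the
subsemiring generated by the variables, i.e. it is a polynomial with coefficients in `ℕ`.
-/

open MvPolynomial Finset Matrix

theorem Finset.prod_filter_fst_lt_snd {α M : Type*} [Fintype α] [Preorder α]
    [LocallyFiniteOrderTop α] [DecidableLT α] [CommMonoid M] (f : α → α → M) :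
    ∏ q ∈ univ.filter (fun q : α × α => q.1 < q.2), f q.1 q.2 = ∏ i, ∏ j ∈ Ioi i, f i j := by
  simp_rw [← filter_lt_eq_Ioi, prod_filter, Fintype.prod_prod_type]

variable {R : Type*} [CommRing R]

theorem Fin.prod_prod_Ioi_sub_succ {k : ℕ} (x : Fin (k + 1) → R) :
    ∏ i, ∏ j ∈ Ioi i, (x j - x i) =
      (∏ j : Fin k, (x j.succ - x 0)) * ∏ i : Fin k, ∏ j ∈ Ioi i, (x j.succ - x i.succ) := by
  simp [Fin.prod_univ_succ, Fin.prod_Ioi_succ]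

namespace Matrix

theorem det_of_sum_eq_sum_piFinset {n ι : Type*} [Fintype n] [DecidableEq n]
    (s : n → Finset ι) (f : n → ι → n → R) :
    det (of fun i j => ∑ u ∈ s i, f i u j) =
      ∑ e ∈ Fintype.piFinset s, det (of fun i j => f i (e i) j) := by
  rw [show (of fun i j => ∑ u ∈ s i, f i u j) = fun i => ∑ u ∈ s i, f i u by
    ext i j; simp [Finset.sum_apply]]
  exact (detRowAlternating (R := R) (n := n)).toMultilinearMap.map_sum_finset f s

theorem det_of_pow_eq_pow_mul_det_sub {k : ℕ} (x : Fin (k + 1) → R) {a : Fin (k + 1) → ℕ}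
    (ha : Monotone a) :
    det (of fun i j => x j ^ a i) = x 0 ^ a 0 * det (of fun i j : Fin k =>
      x j.succ ^ a i.succ - x j.succ ^ a i.castSucc * x 0 ^ (a i.succ - a i.castSucc)) := by
  set B : Matrix (Fin (k + 1)) (Fin (k + 1)) R := of (Fin.cons (fun j => x j ^ a 0)
    fun i j => x j ^ a i.succ - x j ^ a i.castSucc * x 0 ^ (a i.succ - a i.castSucc))
  have hB : det (of fun i j => x j ^ a i) = det B :=
    det_eq_of_forall_row_eq_smul_add_pred (fun i => x 0 ^ (a i.succ - a i.castSucc))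
      (fun j => rfl) fun i j => by simp [B]; ring
  have hB_succ_zero : ∀ i : Fin k, B i.succ 0 = 0 := fun i => by
    simp [B, ← pow_add, Nat.add_sub_cancel' (ha i.castSucc_le_succ)]
  rw [hB, det_succ_column_zero, Fin.sum_univ_succ]
  simp [hB_succ_zero, B, submatrix]

theorem exists_mem_closure_det_of_pow_eq_prod_mul {k : ℕ} (x : Fin k → R) {a : Fin k → ℕ}
    (ha : Monotone a) :
    ∃ s ∈ Subsemiring.closure (Set.range x),
      det (of fun i j => x j ^ a i) = (∏ i, ∏ j ∈ Ioi i, (x j - x i)) * s := by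
  induction k with
  | zero => exact ⟨1, one_mem _, by simp⟩
  | succ k ih =>
    set I : Fin k → Finset ℕ := fun i => Ico (a i.castSucc) (a i.succ)
    have hI_mono : ∀ e ∈ Fintype.piFinset I, Monotone e := by
      intro e he i j hij
      obtain rfl | hij := hij.eq_or_lt
      · rfl
      have hi := mem_Ico.1 (Fintype.mem_piFinset.1 he i)
      have hj := mem_Ico.1 (Fintype.mem_piFinset.1 he j)
      have : a i.succ ≤ a j.castSucc := ha (Fin.succ_le_castSucc_iff.2 hij)
      omega
    choose! s hs hdet using fun e he => ih (fun j => x j.succ) (hI_mono e he)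
    refine ⟨x 0 ^ a 0 * ∑ e ∈ Fintype.piFinset I, (∏ i, x 0 ^ (a i.succ - 1 - e i)) * s e,
      ?_, ?_⟩
    · have hx0 : x 0 ∈ Subsemiring.closure (Set.range x) := Subsemiring.subset_closure ⟨0, rfl⟩
      refine mul_mem (pow_mem hx0 _) (sum_mem fun e he => mul_mem
        (prod_mem fun i _ => pow_mem hx0 _) ?_)
      exact Subsemiring.closure_mono (Set.range_comp_subset_range _ _) (hs e he)
    calc det (of fun i j => x j ^ a i)
        = x 0 ^ a 0 * det (of fun i j : Fin k => (x j.succ - x 0) *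
            ∑ e ∈ I i, x 0 ^ (a i.succ - 1 - e) * x j.succ ^ e) := by
          rw [det_of_pow_eq_pow_mul_det_sub x ha]
          refine congrArg (x 0 ^ a 0 * det ·) (Matrix.ext fun i j => ?_)
          simp_rw [of_apply, I, mul_comm (x 0 ^ _), mul_geom_sum₂_Ico _ _ (ha i.castSucc_le_succ)]
      _ = x 0 ^ a 0 * ((∏ j : Fin k, (x j.succ - x 0)) * ∑ e ∈ Fintype.piFinset I,
            (∏ i, x 0 ^ (a i.succ - 1 - e i)) * det (of fun i j => x j.succ ^ e i)) := by
          refine congrArg (x 0 ^ a 0 * ·) ((det_mul_row (fun j => x j.succ - x 0)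
            (of fun i j => ∑ e ∈ I i, x 0 ^ (a i.succ - 1 - e) * x j.succ ^ e)).trans ?_)
          rw [det_of_sum_eq_sum_piFinset]
          exact congrArg _ (sum_congr rfl fun e _ =>
            det_mul_column (fun i => x 0 ^ (a i.succ - 1 - e i)) (of fun i j => x j.succ ^ e i))
      _ = _ := by
          rw [Fin.prod_prod_Ioi_sub_succ, mul_sum, mul_sum, mul_sum, mul_sum]
          refine sum_congr rfl fun e he => ?_
          rw [hdet e he]
          ring

end Matrix

theorem schur_polynomial_nonneg_coeffs_general
    (k : ℕ) (a : Fin k → ℕ) (ha : StrictMono a) :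
    ∃ s : MvPolynomial (Fin k) ℤ,
      Matrix.det (fun i j : Fin k => (X j : MvPolynomial (Fin k) ℤ) ^ a i)
        = (∏ q ∈ Finset.univ.filter (fun q : Fin k × Fin k => q.1 < q.2),
            (X q.2 - X q.1)) * s
      ∧ ∀ μ : Fin k →₀ ℕ, 0 ≤ s.coeff μ := by
  obtain ⟨s, hs, hdet⟩ :=
    exists_mem_closure_det_of_pow_eq_prod_mul (X : Fin k → MvPolynomial (Fin k) ℤ) ha.monotone
  obtain ⟨p, rfl⟩ := RingHom.mem_rangeS.1 <|
    Subsemiring.closure_le (t := (map (Nat.castRingHom ℤ)).rangeS).2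
      (Set.range_subset_iff.2 fun j => RingHom.mem_rangeS.2 ⟨X j, map_X _ _⟩) hs
  exact ⟨map (Nat.castRingHom ℤ) p, by rwa [prod_filter_fst_lt_snd (fun i j => X j - X i)],
    fun μ => by simp [coeff_map]⟩

/-- The Schur polynomial `s_A` associated to a strictly increasing index set
`A = {a 0 < a 1 < ... < a (k-1)} ⊆ {0,...,n-1}`, characterized by
`det ((x j)^(a i)) = ∏_{i<j} (x j - x i) * s_A`, has nonnegative (integer)
coefficients. -/
theorem schur_polynomial_nonneg_coeffs
    (n k : ℕ) (a : Fin k → ℕ) (ha : StrictMono a) (han : ∀ i, a i < n) :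
    ∃ s : MvPolynomial (Fin k) ℤ,
      Matrix.det (fun i j : Fin k => (X j : MvPolynomial (Fin k) ℤ) ^ a i)
        = (∏ q ∈ Finset.univ.filter (fun q : Fin k × Fin k => q.1 < q.2),
            (X q.2 - X q.1)) * s
      ∧ ∀ μ : Fin k →₀ ℕ, 0 ≤ s.coeff μ :=
  schur_polynomial_nonneg_coeffs_general k a ha
end

section
/- Let p be a prime and T_p the p-th Chebyshev polynomial of the first kind. Then 2(T_p(X/2) − 1) = P(X)²·(X − 2), where P(X) = ∏_{j=1}^{(p−1)/2}(X − 2cos(2πj/p)). -/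
/-!
Write `C_n` for the rescaled Chebyshev polynomial, `C_n(2 cos θ) = 2 cos(nθ)`; the left-hand side
is `C_p - 2`, monic of degree `p`. It vanishes at `2` and at every `2 cos(2πj/p)`, and at the
latter points with `0 < 2j < p` so does its derivative, since `C_n'(2 cos θ) sin θ = n sin(nθ)`.
These `(p - 1)/2` double roots and the simple root `2` are distinct and exhaust the degree `p`.
-/

open Polynomial Real

theorem prod_X_sub_C_sq_mul_X_sub_C_dvd {K ι : Type*} [Field K] {s : Finset ι} {a : ι → K}
    {b : K} {q : K[X]} (ha : Set.InjOn a s) (hab : ∀ i ∈ s, a i ≠ b)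
    (hsq : ∀ i ∈ s, (X - C (a i)) ^ 2 ∣ q) (hb : q.IsRoot b) :
    (∏ i ∈ s, (X - C (a i))) ^ 2 * (X - C b) ∣ q := by
  rw [← Finset.prod_pow]
  refine IsCoprime.mul_dvd ?_ (Finset.prod_dvd_of_coprime ?_ hsq) (dvd_iff_isRoot.mpr hb)
  · exact IsCoprime.prod_left fun i hi =>
      (isCoprime_X_sub_C_of_isUnit_sub (sub_ne_zero.mpr (hab i hi)).isUnit).pow_left
  · intro i hi j hj hij
    exact (isCoprime_X_sub_C_of_isUnit_sub (sub_ne_zero.mpr (ha.ne hi hj hij)).isUnit).pow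

theorem sq_X_sub_C_dvd_of_isRoot_derivative {K : Type*} [Field K] {q : K[X]} {a : K}
    (h : q.IsRoot a) (h' : (derivative q).IsRoot a) : (X - C a) ^ 2 ∣ q := by
  rcases eq_or_ne q 0 with rfl | hq
  · exact dvd_zero _
  exact (le_rootMultiplicity_iff hq).mp ((one_lt_rootMultiplicity_iff_isRoot hq).mpr ⟨h, h'⟩)

theorem two_pi_mul_succ_div_mem_Ioo {n j : ℕ} (h : 2 * (j + 1) < n) :
    2 * π * (j + 1) / n ∈ Set.Ioo 0 π := by
  have hn : (0 : ℝ) < n := by exact_mod_cast (show 0 < n by omega)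
  have h' : 2 * ((j : ℝ) + 1) < n := by exact_mod_cast h
  constructor
  · positivity
  · rw [div_lt_iff₀ hn]
    nlinarith [pi_pos]

theorem injOn_two_mul_cos_two_pi_mul_succ_div (n : ℕ) :
    Set.InjOn (fun j : ℕ => 2 * cos (2 * π * (j + 1) / n)) {j | 2 * (j + 1) < n} := by
  intro i hi j hj hij
  have hin : 2 * (i + 1) < n := hi
  have hn0 : (n : ℝ) ≠ 0 := Nat.cast_ne_zero.mpr (by omega)
  have h := injOn_cos (Set.Ioo_subset_Icc_self (two_pi_mul_succ_div_mem_Ioo hi))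
    (Set.Ioo_subset_Icc_self (two_pi_mul_succ_div_mem_Ioo hj)) (mul_left_cancel₀ two_ne_zero hij)
  rw [div_left_inj' hn0, mul_right_inj' two_pi_pos.ne'] at h
  exact_mod_cast (add_left_inj 1).mp h

namespace Polynomial.Chebyshev

variable {K : Type*} [Field K] [NeZero (2 : K)]

theorem C_eq_two_mul_T_comp_inv_two_mul_X (n : ℤ) :
    Chebyshev.C K n = 2 * (T K n).comp (Polynomial.C 2⁻¹ * X) := by
  let := invertibleOfNonzero (two_ne_zero' K)
  rw [C_eq_two_mul_T_comp_half_mul_X, invOf_eq_inv]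

theorem natDegree_C (n : ℤ) : (Chebyshev.C K n).natDegree = n.natAbs := by
  rw [C_eq_two_mul_T_comp_inv_two_mul_X, ← Polynomial.C_ofNat, natDegree_C_mul two_ne_zero,
    natDegree_comp, natDegree_T, natDegree_C_mul_X _ (inv_ne_zero two_ne_zero), mul_one]

theorem monic_C {n : ℤ} (hn : n ≠ 0) : (Chebyshev.C K n).Monic := by
  have h1 : (Polynomial.C (2⁻¹ : K) * X).natDegree = 1 :=
    natDegree_C_mul_X _ (inv_ne_zero two_ne_zero)
  rw [Monic, C_eq_two_mul_T_comp_inv_two_mul_X, ← Polynomial.C_ofNat, leadingCoeff_C_mul_of_isUnit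
    (isUnit_iff_ne_zero.mpr two_ne_zero), leadingCoeff_comp (by rw [h1]; exact one_ne_zero),
    leadingCoeff_T, natDegree_T, leadingCoeff_C_mul_X, ← mul_assoc, ← pow_succ',
    Nat.sub_add_cancel (Int.natAbs_pos.mpr hn), ← mul_pow, mul_inv_cancel₀ two_ne_zero, one_pow]

theorem natDegree_two_lt_natDegree_C {n : ℤ} (hn : n ≠ 0) :
    (2 : K[X]).natDegree < (Chebyshev.C K n).natDegree := by
  rw [natDegree_C, ← Polynomial.C_ofNat, Polynomial.natDegree_C]
  exact Int.natAbs_pos.mpr hn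

theorem monic_C_sub_two {n : ℤ} (hn : n ≠ 0) : (Chebyshev.C K n - 2).Monic :=
  (monic_C hn).sub_of_left (degree_lt_degree (natDegree_two_lt_natDegree_C hn))

theorem natDegree_C_sub_two {n : ℤ} (hn : n ≠ 0) :
    (Chebyshev.C K n - 2).natDegree = n.natAbs := by
  rw [natDegree_sub_eq_left_of_natDegree_lt (natDegree_two_lt_natDegree_C hn), natDegree_C]

theorem derivative_C_eval_two_mul_cos_mul_sin (n : ℤ) (θ : ℝ) :
    (derivative (Chebyshev.C ℝ n)).eval (2 * cos θ) * sin θ = n * sin (n * θ) := by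
  have hU := U_real_cos θ (n - 1)
  rw [Int.cast_sub, Int.cast_one, sub_add_cancel] at hU
  rw [C_eq_two_mul_T_comp_inv_two_mul_X, derivative_mul, derivative_comp, T_derivative_eq_U]
  simp only [derivative_ofNat, zero_mul, zero_add, derivative_mul, derivative_C, derivative_X,
    eval_mul, eval_comp, eval_C, eval_X, eval_ofNat, eval_intCast, mul_one]
  rw [← hU, inv_mul_cancel_left₀ two_ne_zero]
  ring

theorem sq_X_sub_C_two_mul_cos_dvd_C_sub_two {n : ℤ} {θ : ℝ} (hcos : cos (n * θ) = 1)
    (hsin : sin θ ≠ 0) : (X - Polynomial.C (2 * cos θ)) ^ 2 ∣ Chebyshev.C ℝ n - 2 := by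
  have hsin_n : sin (n * θ) = 0 := by nlinarith [sin_sq_add_cos_sq (n * θ)]
  refine sq_X_sub_C_dvd_of_isRoot_derivative ?_ ?_
  · simp [IsRoot, C_two_mul_real_cos, hcos]
  · have h := derivative_C_eval_two_mul_cos_mul_sin n θ
    rw [hsin_n, mul_zero] at h
    simpa [IsRoot] using (mul_eq_zero.mp h).resolve_right hsin

theorem C_sub_two_eq_of_odd {n : ℕ} (hn : Odd n) :
    Chebyshev.C ℝ n - 2 = (∏ j ∈ Finset.range ((n - 1) / 2),
      (X - Polynomial.C (2 * cos (2 * π * (j + 1) / n)))) ^ 2 * (X - Polynomial.C 2) := by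
  set m := (n - 1) / 2
  have hnm : n = 2 * m + 1 := by obtain ⟨k, rfl⟩ := hn; omega
  have hn0 : (n : ℝ) ≠ 0 := by exact_mod_cast hn.pos.ne'
  have hn0' : (n : ℤ) ≠ 0 := by exact_mod_cast hn.pos.ne'
  have hθ : ∀ j ∈ Finset.range m, 2 * π * (j + 1) / n ∈ Set.Ioo 0 π := fun j hj =>
    two_pi_mul_succ_div_mem_Ioo (by rw [Finset.mem_range] at hj; omega)
  have hP : (∏ j ∈ Finset.range m, (X - Polynomial.C (2 * cos (2 * π * (j + 1) / n)))).Monic :=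
    monic_prod_of_monic _ _ fun j _ => monic_X_sub_C _
  refine eq_of_monic_of_dvd_of_natDegree_le ((hP.pow 2).mul (monic_X_sub_C 2))
    (monic_C_sub_two hn0') ?_ ?_
  · refine prod_X_sub_C_sq_mul_X_sub_C_dvd ?_ ?_ ?_ ?_
    · refine (injOn_two_mul_cos_two_pi_mul_succ_div n).mono fun j hj => ?_
      rw [Finset.coe_range, Set.mem_Iio] at hj
      show 2 * (j + 1) < n
      omega
    · intro j hj
      have h := strictAntiOn_cos ⟨le_rfl, pi_pos.le⟩ (Set.Ioo_subset_Icc_self (hθ j hj)) (hθ j hj).1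
      rw [cos_zero] at h
      linarith
    · intro j hj
      refine sq_X_sub_C_two_mul_cos_dvd_C_sub_two ?_ (sin_pos_of_mem_Ioo (hθ j hj)).ne'
      rw [Int.cast_natCast, mul_div_cancel₀ _ hn0, ← Nat.cast_succ,
        mul_comm, cos_nat_mul_two_pi]
    · simp [IsRoot, C_eval_two]
  · rw [natDegree_C_sub_two hn0', (hP.pow 2).natDegree_mul (monic_X_sub_C 2), hP.natDegree_pow,
      natDegree_prod_of_monic _ _ fun j _ => monic_X_sub_C _]
    simp only [natDegree_X_sub_C, Finset.sum_const, Finset.card_range, smul_eq_mul, mul_one,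
      Int.natAbs_natCast]
    omega

end Polynomial.Chebyshev

theorem chebyshev_factorization_general
    (p : ℕ) (hodd : Odd p) :
    (2 : ℝ[X]) * ((Polynomial.Chebyshev.T ℝ p).comp (Polynomial.C (2⁻¹ : ℝ) * Polynomial.X) - 1)
      = (∏ j ∈ Finset.range ((p - 1) / 2),
          (Polynomial.X - Polynomial.C (2 * Real.cos (2 * Real.pi * (j + 1) / p)))) ^ 2
        * (Polynomial.X - Polynomial.C 2) := by
  rw [mul_sub, mul_one, ← Chebyshev.C_eq_two_mul_T_comp_inv_two_mul_X]
  exact Chebyshev.C_sub_two_eq_of_odd hodd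

/-- `2(T_p(X/2) - 1) = P(X)² (X - 2)` where `T_p` is the `p`-th Chebyshev
polynomial of the first kind and `P(X) = ∏_{j=1}^{(p-1)/2} (X - 2cos(2πj/p))`. -/
theorem chebyshev_factorization
    (p : ℕ) (hp : p.Prime) (hodd : Odd p) :
    (2 : ℝ[X]) * ((Polynomial.Chebyshev.T ℝ p).comp (Polynomial.C (2⁻¹ : ℝ) * Polynomial.X) - 1)
      = (∏ j ∈ Finset.range ((p - 1) / 2),
          (Polynomial.X - Polynomial.C (2 * Real.cos (2 * Real.pi * (j + 1) / p)))) ^ 2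
        * (Polynomial.X - Polynomial.C 2) :=
  chebyshev_factorization_general p hodd
end

section
/- Let p, q be distinct primes with ord_p(q) = p − 1. If q > max_{A,B} |m_{A,B}·p − ∏_{i<j}(a_j − a_i)/∏_{i<j}(j − i)|, the maximum over all pairs of subsets A, B ⊆ {0,...,p−1} of equal size, then all minors of the Fourier matrix F_p over 𝔽_{q^{p−1}} are nonzero. -/
open MvPolynomial

/-!
If a minor `det (ω ^ (a i * b j))` vanished, the Schur polynomial `s` with
`det (X j ^ a i) = (∏_{i<j} (X j - X i)) * s` would vanish at `(ω ^ b j)`, where the Vandermonde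
factor does not. Since `s` has integer coefficients and `q` generates `(ZMod p)ˣ`, Frobenius moves
this zero to `(ω ^ (c * b j))` for every `c` prime to `p`. Summing over `c` modulo `p` gives
`s(1, …, 1) = p * m_{A,B}` in characteristic `q`; the bound on `q` makes this an equality of
integers, so `p` divides `s(1, …, 1) * ∏_{i<j} (j - i) = ∏_{i<j} (a j - a i)`, which is
impossible because `0 < a j - a i < p`.
-/

open Finset Function

theorem Finset.prod_dvd_of_prime {ι M : Type*} [CommMonoidWithZero M] [IsCancelMulZero M]
    {s : Finset ι} {f : ι → M} {n : M} (hp : ∀ i ∈ s, Prime (f i))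
    (hs : (s : Set ι).Pairwise fun i j => ¬ f i ∣ f j) (hn : ∀ i ∈ s, f i ∣ n) :
    ∏ i ∈ s, f i ∣ n := by
  classical
  induction s using Finset.induction_on generalizing n with
  | empty => simp
  | insert a s ha ih =>
    simp only [mem_insert, forall_eq_or_imp] at hp hn
    rw [coe_insert] at hs
    obtain ⟨c, rfl⟩ := hn.1
    rw [prod_insert ha]
    refine mul_dvd_mul_left _ (ih hp.2 (hs.mono (Set.subset_insert _ _)) fun i hi => ?_)
    refine ((hp.2 i hi).dvd_or_dvd (hn.2 i hi)).resolve_left fun hia => ?_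
    exact hs (Set.mem_insert_of_mem _ hi) (Set.mem_insert _ _) (by rintro rfl; exact ha hi) hia

theorem Fin.prod_filter_lt_eq_prod_Ioi {M : Type*} [CommMonoid M] {k : ℕ}
    (f : Fin k → Fin k → M) :
    ∏ w ∈ univ.filter (fun w : Fin k × Fin k => w.1 < w.2), f w.1 w.2 =
      ∏ i, ∏ j ∈ Ioi i, f i j := by
  rw [prod_sigma']
  exact prod_nbij' (fun w => ⟨w.1, w.2⟩) (fun w => (w.1, w.2)) (by simp) (by simp) (by simp)
    (by simp) (by simp)

lemma Nat.Prime.not_dvd_prod_sub {ι : Type*} [Fintype ι] [LinearOrder ι] {p : ℕ} (hp : p.Prime)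
    {a : ι → ℕ} (ha : StrictMono a) (hap : ∀ i, a i < p) :
    ¬ (p : ℤ) ∣ ∏ w ∈ univ.filter (fun w : ι × ι => w.1 < w.2), ((a w.2 : ℤ) - a w.1) := by
  rw [Prime.dvd_finsetProd_iff (Nat.prime_iff_prime_int.1 hp)]
  rintro ⟨w, hw, hdvd⟩
  have hlt := ha (mem_filter.1 hw).2
  have hle := Int.le_of_dvd (by omega) hdvd
  have hp_lt := hap w.2
  omega

lemma ZMod.exists_pow_eq_of_orderOf_eq {p : ℕ} [Fact p.Prime] {g : ZMod p}
    (hg : orderOf g = p - 1) {x : ZMod p} (hx : x ≠ 0) : ∃ n : ℕ, g ^ n = x := by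
  have hg0 : IsOfFinOrder g :=
    orderOf_pos_iff.1 (hg ▸ Nat.sub_pos_of_lt (Fact.out : p.Prime).one_lt)
  let u := hg0.isUnit.unit
  have htop : Subgroup.zpowers u = ⊤ := by
    refine Subgroup.eq_top_of_card_eq _ ?_
    rw [Nat.card_zpowers, ← orderOf_units, IsUnit.unit_spec, hg, Nat.card_eq_fintype_card,
      ZMod.card_units]
  obtain ⟨n, hn⟩ := mem_powers_iff_mem_zpowers.2 (htop ▸ Subgroup.mem_top (Units.mk0 x hx))
  exact ⟨n, by simpa [u] using congrArg Units.val hn⟩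

lemma IsPrimitiveRoot.sum_pow_pow {K : Type*} [Field K] {p : ℕ} {ω : K}
    (hω : IsPrimitiveRoot ω p) (t : ℕ) :
    ∑ c ∈ range p, (ω ^ t) ^ c = if p ∣ t then (p : K) else 0 := by
  split_ifs with h
  · simp [(hω.pow_eq_one_iff_dvd t).2 h]
  · rw [geom_sum_eq (mt (hω.pow_eq_one_iff_dvd t).1 h), ← pow_mul, mul_comm, pow_mul,
      hω.pow_eq_one, one_pow, sub_self, zero_div]

namespace Polynomial

lemma exists_X_pow_sub_X_pow_eq_mul (m n : ℕ) :
    ∃ g : ℤ[X], X ^ m - X ^ n = (X - 1) * g ∧ g.eval 1 = (m : ℤ) - n :=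
  ⟨∑ i ∈ range m, X ^ i - ∑ i ∈ range n, X ^ i,
    by rw [mul_sub, mul_comm, geom_sum_mul, mul_comm, geom_sum_mul]; ring,
    by simp [eval_finsetSum]⟩

lemma exists_prod_X_pow_sub_X_pow_eq_mul {ι : Type*} (s : Finset ι) (m n : ι → ℕ) :
    ∃ g : ℤ[X], ∏ i ∈ s, (X ^ m i - X ^ n i) = (X - 1) ^ #s * g ∧
      g.eval 1 = ∏ i ∈ s, ((m i : ℤ) - n i) := by
  choose g hg hg1 using exists_X_pow_sub_X_pow_eq_mul
  refine ⟨∏ i ∈ s, g (m i) (n i), ?_, by simp [eval_prod, hg1]⟩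
  rw [← prod_const, ← prod_mul_distrib]
  exact prod_congr rfl fun i _ => hg _ _

end Polynomial

namespace MvPolynomial

section Vandermonde

variable {σ R : Type*} [CommRing R]

lemma X_sub_X_dvd_sub_rename_update [DecidableEq σ] (i j : σ) (f : MvPolynomial σ R) :
    X j - X i ∣ f - rename (update id i j) f := by
  rw [← Ideal.mem_span_singleton, ← Ideal.Quotient.eq]
  set I := Ideal.span {(X j - X i : MvPolynomial σ R)}
  have hπ : (Ideal.Quotient.mkₐ R I).comp (rename (update id i j)) = Ideal.Quotient.mkₐ R I := by
    refine algHom_ext fun l => ?_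
    rw [AlgHom.comp_apply, rename_X]
    rcases eq_or_ne l i with rfl | hl
    · rw [update_self]
      exact Ideal.Quotient.eq.2 (Ideal.mem_span_singleton_self _)
    · rw [update_of_ne hl, id]
  exact (AlgHom.congr_fun hπ f).symm

lemma prime_X_sub_X [IsDomain R] {i j : σ} (h : i ≠ j) :
    Prime (X j - X i : MvPolynomial σ R) := by
  classical
  let E : MvPolynomial σ R ≃ₐ[R] Polynomial (MvPolynomial {l : σ // l ≠ j} R) :=
    (renameEquiv R (Equiv.optionSubtypeNe j).symm).trans (optionEquivLeft R {l : σ // l ≠ j})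
  have hE : E (X j - X i) = Polynomial.X - Polynomial.C (X ⟨i, h⟩) := by
    simp [E, Equiv.optionSubtypeNe_symm_of_ne h, optionEquivLeft_X_none, optionEquivLeft_X_some]
  rw [← MulEquiv.prime_iff E.toMulEquiv]
  exact hE ▸ Polynomial.prime_X_sub_C _

variable [LinearOrder σ]

lemma not_X_sub_X_dvd [Nontrivial R] {i j i' j' : σ} (h : i < j) (h' : i' < j')
    (hne : (i, j) ≠ (i', j')) : ¬ (X j - X i : MvPolynomial σ R) ∣ X j' - X i' := by
  intro hdvd
  have hu := map_dvd (rename (R := R) (update id i j)) hdvd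
  simp only [map_sub, rename_X, update_apply, id, ite_self, if_true, sub_self, zero_dvd_iff,
    sub_eq_zero] at hu
  have hu' := X_injective hu
  split_ifs at hu' <;> grind

variable [Fintype σ] [IsDomain R]

lemma prod_X_sub_X_dvd {f : MvPolynomial σ R} (hf : ∀ i j, i < j → X j - X i ∣ f) :
    ∏ w ∈ univ.filter (fun w : σ × σ => w.1 < w.2), (X w.2 - X w.1) ∣ f := by
  refine prod_dvd_of_prime (fun w hw => prime_X_sub_X (mem_filter.1 hw).2.ne)
    (fun w hw w' hw' hne => ?_) fun w hw => hf _ _ (mem_filter.1 hw).2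
  simp only [coe_filter, mem_univ, true_and, Set.mem_ofPred_eq] at hw hw'
  exact not_X_sub_X_dvd hw hw' hne

lemma prod_X_sub_X_dvd_det (a : σ → ℕ) :
    ∏ w ∈ univ.filter (fun w : σ × σ => w.1 < w.2), (X w.2 - X w.1) ∣
      Matrix.det (Matrix.of fun i j : σ => (X j : MvPolynomial σ R) ^ a i) := by
  refine prod_X_sub_X_dvd fun i j hij => ?_
  have hzero : rename (update id i j)
      (Matrix.det (Matrix.of fun i j : σ => (X j : MvPolynomial σ R) ^ a i)) = 0 := by
    rw [AlgHom.map_det]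
    refine Matrix.det_zero_of_column_eq hij.ne fun r => ?_
    simp [hij.ne']
  simpa [hzero] using X_sub_X_dvd_sub_rename_update i j
    (Matrix.det (Matrix.of fun i j : σ => (X j : MvPolynomial σ R) ^ a i))

lemma aeval_eq_zero_of_det_eq_zero {a : σ → ℕ} {s : MvPolynomial σ ℤ} {x : σ → R}
    (hx : Injective x)
    (hs : Matrix.det (Matrix.of fun i j : σ => (X j : MvPolynomial σ ℤ) ^ a i) =
      (∏ w ∈ univ.filter (fun w : σ × σ => w.1 < w.2), (X w.2 - X w.1)) * s)
    (hdet : Matrix.det (Matrix.of fun i j : σ => x j ^ a i) = 0) :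
    aeval x s = 0 := by
  have h := congrArg (aeval x) hs
  rw [AlgHom.map_det, map_mul, map_prod] at h
  have hV : ∏ w ∈ univ.filter (fun w : σ × σ => w.1 < w.2),
      aeval x (X w.2 - X w.1 : MvPolynomial σ ℤ) ≠ 0 :=
    prod_ne_zero_iff.2 fun w hw => by
      rw [map_sub, aeval_X, aeval_X, sub_ne_zero]
      exact hx.ne (mem_filter.1 hw).2.ne'
  refine (mul_eq_zero.1 (h.symm.trans ?_)).resolve_left hV
  convert hdet using 2
  ext
  simp

end Vandermonde

lemma eval_one_mul_prod_sub_eq {k : ℕ} (a : Fin k → ℕ) (s : MvPolynomial (Fin k) ℤ)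
    (hs : Matrix.det (Matrix.of fun i j : Fin k => (X j : MvPolynomial (Fin k) ℤ) ^ a i)
      = (∏ w ∈ univ.filter (fun w : Fin k × Fin k => w.1 < w.2), (X w.2 - X w.1)) * s) :
    eval 1 s * ∏ w ∈ univ.filter (fun w : Fin k × Fin k => w.1 < w.2), ((w.2 : ℤ) - w.1) =
      ∏ w ∈ univ.filter (fun w : Fin k × Fin k => w.1 < w.2), ((a w.2 : ℤ) - a w.1) := by
  set P := univ.filter (fun w : Fin k × Fin k => w.1 < w.2)
  -- Specialise `X j ↦ t ^ j`: both sides become products of `t ^ m - t ^ n`, each divisible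
  -- by `t - 1` with quotient `m - n` at `t = 1`.
  let t : Polynomial ℤ := Polynomial.X
  let ψ := aeval (R := ℤ) fun j : Fin k => t ^ (j : ℕ)
  have hdet : ψ (Matrix.det (Matrix.of fun i j : Fin k => (X j) ^ a i)) =
      ∏ w ∈ P, (t ^ (a w.2) - t ^ (a w.1)) := by
    rw [AlgHom.map_det, Fin.prod_filter_lt_eq_prod_Ioi (fun i j => t ^ (a j) - t ^ (a i)),
      ← Matrix.det_vandermonde]
    congr 1
    ext i j
    simp [ψ, Matrix.vandermonde, ← pow_mul, mul_comm]
  have hV : ψ (∏ w ∈ P, (X w.2 - X w.1)) = ∏ w ∈ P, (t ^ (w.2 : ℕ) - t ^ (w.1 : ℕ)) := by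
    simp [ψ, map_prod]
  have hψ1 : (ψ s).eval 1 = eval 1 s := by
    rw [← Polynomial.coe_aeval_eq_eval, comp_aeval_apply]
    simp [t, Pi.one_def]
  obtain ⟨g, hg, hg1⟩ :=
    Polynomial.exists_prod_X_pow_sub_X_pow_eq_mul P (fun w => a w.2) (fun w => a w.1)
  obtain ⟨h, hh, hh1⟩ :=
    Polynomial.exists_prod_X_pow_sub_X_pow_eq_mul P (fun w => w.2) (fun w => w.1)
  have hψ := congrArg ψ hs
  rw [map_mul, hdet, hV, hg, hh, mul_assoc] at hψ
  have heval := congrArg (Polynomial.eval 1)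
    (mul_left_cancel₀ (pow_ne_zero _ (Polynomial.X_sub_C_ne_zero 1)) hψ)
  rw [Polynomial.eval_mul, hg1, hh1, hψ1] at heval
  rw [heval, mul_comm]

/-- The paper's `m_{A,B}` when `s` is the Schur polynomial of `A` and `b` enumerates `B`. -/
def dvdCoeffSum {σ : Type*} [Fintype σ] (p : ℕ) (b : σ → ℕ) (s : MvPolynomial σ ℤ) : ℤ :=
  ∑ μ ∈ s.support, s.coeff μ * if (p : ℤ) ∣ ∑ j, (μ j : ℤ) * b j then 1 else 0

section Field

variable {K σ : Type*} [Field K]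

lemma aeval_pow_pow_eq_pow (q : ℕ) [ExpChar K q] (x : σ → K) (s : MvPolynomial σ ℤ) (n : ℕ) :
    aeval (fun j => x j ^ q ^ n) s = aeval x s ^ q ^ n := by
  have := comp_aeval_apply (f := x) (iterateFrobenius K q n).toIntAlgHom s
  simp only [RingHom.toIntAlgHom_apply, iterateFrobenius_def] at this
  exact this.symm

variable {p q : ℕ} {ω : K}

lemma aeval_pow_mul_eq_zero [ExpChar K q] [Fact p.Prime] (hω : IsPrimitiveRoot ω p)
    (hq : orderOf (q : ZMod p) = p - 1) {b : σ → ℕ} {s : MvPolynomial σ ℤ}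
    (hs : aeval (fun j => ω ^ b j) s = 0) {c : ℕ} (hc : ¬ p ∣ c) :
    aeval (fun j => ω ^ (b j * c)) s = 0 := by
  obtain ⟨n, hn⟩ := ZMod.exists_pow_eq_of_orderOf_eq hq (x := c)
    (by rwa [Ne, ZMod.natCast_eq_zero_iff])
  have hmod : q ^ n ≡ c [MOD p] := (ZMod.natCast_eq_natCast_iff _ _ _).1 (by push_cast; exact hn)
  have hpow : (fun j => ω ^ (b j * c)) = fun j => (ω ^ b j) ^ q ^ n := by
    funext j
    rw [← pow_mul, ← pow_mod_orderOf, ← hω.eq_orderOf,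
      show b j * c % p = b j * q ^ n % p from hmod.symm.mul_left _, hω.eq_orderOf, pow_mod_orderOf]
  rw [hpow, aeval_pow_pow_eq_pow, hs, zero_pow (pow_ne_zero _ (expChar_ne_zero K q))]

variable [Fintype σ]

lemma sum_aeval_pow_mul_eq_dvdCoeffSum_mul (hω : IsPrimitiveRoot ω p) (b : σ → ℕ)
    (s : MvPolynomial σ ℤ) :
    ∑ c ∈ range p, aeval (fun j => ω ^ (b j * c)) s = (dvdCoeffSum p b s * p : ℤ) := by
  have hterm : ∀ c, aeval (fun j => ω ^ (b j * c)) s =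
      ∑ μ ∈ s.support, ((s.coeff μ : ℤ) : K) * (ω ^ ∑ j, μ j * b j) ^ c := by
    intro c
    rw [aeval_eq_eval₂Hom, coe_eval₂Hom, eval₂_eq']
    refine sum_congr rfl fun μ _ => ?_
    rw [← prod_pow_eq_pow_sum, ← prod_pow]
    refine congrArg _ (prod_congr rfl fun j _ => ?_)
    rw [← pow_mul, ← pow_mul]
    ring_nf
  simp_rw [hterm]
  rw [sum_comm, dvdCoeffSum]
  push_cast
  rw [sum_mul]
  refine sum_congr rfl fun μ _ => ?_
  rw [← mul_sum, hω.sum_pow_pow]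
  have : (p : ℤ) ∣ ∑ j, (μ j : ℤ) * b j ↔ p ∣ ∑ j, μ j * b j := by exact_mod_cast Iff.rfl
  split_ifs <;> simp_all

lemma eval_one_eq_dvdCoeffSum_mul [ExpChar K q] [Fact p.Prime] (hω : IsPrimitiveRoot ω p)
    (hq : orderOf (q : ZMod p) = p - 1) {b : σ → ℕ} {s : MvPolynomial σ ℤ}
    (hs : aeval (fun j => ω ^ b j) s = 0) :
    ((eval 1 s : ℤ) : K) = (dvdCoeffSum p b s * p : ℤ) := by
  rw [← sum_aeval_pow_mul_eq_dvdCoeffSum_mul hω, sum_eq_single 0]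
  · have := comp_aeval_apply (f := fun _ : σ => (1 : ℤ)) (Algebra.ofId ℤ K) s
    simpa [Pi.one_def, coe_aeval_eq_eval] using this
  · intro c hc hc0
    exact aeval_pow_mul_eq_zero hω hq hs
      (Nat.not_dvd_of_pos_of_lt (Nat.pos_of_ne_zero hc0) (mem_range.1 hc))
  · simp [(Fact.out : p.Prime).pos]

end Field

end MvPolynomial

theorem finite_field_all_minors_nonzero_of_large_q_general
    (p q : ℕ) [Fact q.Prime] [Fact p.Prime]
    (hr : orderOf (q : ZMod p) = p - 1)
    (ω : GaloisField q (p - 1)) (hω : IsPrimitiveRoot ω p)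
    (hbound : ∀ (k : ℕ) (a b : Fin k → ℕ),
        StrictMono a → StrictMono b → (∀ i, a i < p) → (∀ i, b i < p) →
        ∀ s : MvPolynomial (Fin k) ℤ,
          Matrix.det (fun i j : Fin k => (MvPolynomial.X j : MvPolynomial (Fin k) ℤ) ^ a i)
            = (∏ w ∈ Finset.univ.filter (fun w : Fin k × Fin k => w.1 < w.2),
                (MvPolynomial.X w.2 - MvPolynomial.X w.1)) * s →
        ∀ m : ℤ,
          m = (∑ μ ∈ s.support,
              s.coeff μ * (if (p : ℤ) ∣ (∑ j : Fin k, (μ j : ℤ) * (b j : ℤ)) then 1 else 0)) →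
        ∀ N : ℤ,
          N * (∏ w ∈ Finset.univ.filter (fun w : Fin k × Fin k => w.1 < w.2),
                ((w.2 : ℤ) - (w.1 : ℤ)))
            = (∏ w ∈ Finset.univ.filter (fun w : Fin k × Fin k => w.1 < w.2),
                ((a w.2 : ℤ) - (a w.1 : ℤ))) →
        (q : ℤ) > |m * p - N|) :
    ∀ (k : ℕ) (a b : Fin k → ℕ),
      StrictMono a → StrictMono b → (∀ i, a i < p) → (∀ i, b i < p) →
      Matrix.det (fun i j : Fin k => ω ^ (a i * b j)) ≠ 0 := by
  intro k a b ha hb hap hbp hdet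
  obtain ⟨s, hs⟩ := prod_X_sub_X_dvd_det (R := ℤ) a
  have hN := eval_one_mul_prod_sub_eq a s hs
  have hinj : Injective fun j => ω ^ b j :=
    fun i j h => hb.injective (hω.pow_inj (hbp i) (hbp j) h)
  have hs0 : aeval (fun j => ω ^ b j) s = 0 :=
    aeval_eq_zero_of_det_eq_zero hinj hs <| hdet ▸ congrArg Matrix.det (by
      ext i j
      simp [← pow_mul, mul_comm])
  have hqdvd : (q : ℤ) ∣ dvdCoeffSum p b s * p - eval 1 s :=
    ((CharP.intCast_eq_intCast _ q).1 (eval_one_eq_dvdCoeffSum_mul hω hr hs0)).dvd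
  have hm : dvdCoeffSum p b s * p = eval 1 s := sub_eq_zero.1 <| Int.eq_zero_of_abs_lt_dvd hqdvd
    (hbound k a b ha hb hap hbp s hs (dvdCoeffSum p b s) rfl (eval 1 s) hN)
  have hpN : (p : ℤ) ∣ eval 1 s := hm ▸ dvd_mul_left _ _
  exact (Fact.out : p.Prime).not_dvd_prod_sub ha hap (hN ▸ dvd_mul_of_dvd_left hpN _)

/-- If `q > max_{A,B} |m_{A,B}·p − ∏_{i<j}(a_j−a_i)/∏_{i<j}(j−i)|`, then all
minors of the Fourier matrix `F_p` over `𝔽_{q^{p-1}}` are nonzero. -/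
theorem finite_field_all_minors_nonzero_of_large_q
    (p q : ℕ) (hp : p.Prime) (hq : q.Prime) (hpq : p ≠ q) [Fact q.Prime] [Fact p.Prime]
    (hr : orderOf (q : ZMod p) = p - 1)
    (ω : GaloisField q (p - 1)) (hω : IsPrimitiveRoot ω p)
    (hbound : ∀ (k : ℕ) (a b : Fin k → ℕ),
        StrictMono a → StrictMono b → (∀ i, a i < p) → (∀ i, b i < p) →
        ∀ s : MvPolynomial (Fin k) ℤ,
          Matrix.det (fun i j : Fin k => (MvPolynomial.X j : MvPolynomial (Fin k) ℤ) ^ a i)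
            = (∏ w ∈ Finset.univ.filter (fun w : Fin k × Fin k => w.1 < w.2),
                (MvPolynomial.X w.2 - MvPolynomial.X w.1)) * s →
        ∀ m : ℤ,
          m = (∑ μ ∈ s.support,
              s.coeff μ * (if (p : ℤ) ∣ (∑ j : Fin k, (μ j : ℤ) * (b j : ℤ)) then 1 else 0)) →
        ∀ N : ℤ,
          N * (∏ w ∈ Finset.univ.filter (fun w : Fin k × Fin k => w.1 < w.2),
                ((w.2 : ℤ) - (w.1 : ℤ)))
            = (∏ w ∈ Finset.univ.filter (fun w : Fin k × Fin k => w.1 < w.2),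
                ((a w.2 : ℤ) - (a w.1 : ℤ))) →
        (q : ℤ) > |m * p - N|) :
    ∀ (k : ℕ) (a b : Fin k → ℕ),
      StrictMono a → StrictMono b → (∀ i, a i < p) → (∀ i, b i < p) →
      Matrix.det (fun i j : Fin k => ω ^ (a i * b j)) ≠ 0 :=
  finite_field_all_minors_nonzero_of_large_q_general p q hr ω hω hbound
end

section
/- Let p be prime and suppose every square submatrix of the real Fourier-type matrix M ∈ ℝ^{p×p} (or of F_p over any field) is invertible. Then for every nonzero vector g, ‖g‖_0 + ‖M g‖_0 ≥ p + 1, where ‖·‖_0 counts nonzero entries. -/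
open Classical

/-- Uncertainty principle: if all square submatrices of `M` are invertible,
then `‖g‖₀ + ‖M g‖₀ ≥ p + 1` for every nonzero vector `g`. -/
theorem uncertainty_of_nonvanishing_minors
    (p : ℕ) (hp : p.Prime) (F : Type*) [Field F]
    (M : Matrix (Fin p) (Fin p) F)
    (hM : ∀ (k : ℕ) (r c : Fin k → Fin p),
        Function.Injective r → Function.Injective c →
        (M.submatrix r c).det ≠ 0)
    (g : Fin p → F) (hg : g ≠ 0) :
    p + 1 ≤ (Finset.univ.filter (fun i => g i ≠ 0)).card
        + (Finset.univ.filter (fun i => M.mulVec g i ≠ 0)).card := by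
  by_contra hcon
  push_neg at hcon
  set S := Finset.univ.filter (fun i => g i ≠ 0) with hS
  set N := Finset.univ.filter (fun i => M.mulVec g i ≠ 0) with hN
  set k := S.card with hk
  have hk1 : 1 ≤ k := by
    rcases Function.ne_iff.mp hg with ⟨i, hi⟩
    have hi' : g i ≠ 0 := by simpa using hi
    have : i ∈ S := by simp [hS, hi']
    exact Finset.card_pos.mpr ⟨i, this⟩
  -- zeros of Mg
  set Z := Finset.univ.filter (fun i => M.mulVec g i = 0) with hZ
  have hcardZN : Z.card + N.card = p := by
    have := Finset.card_filter_add_card_filter_not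
      (s := (Finset.univ : Finset (Fin p))) (p := fun i => M.mulVec g i = 0)
    simpa [hZ, hN] using this
  have hkZ : k ≤ Z.card := by omega
  obtain ⟨T, hTZ, hTcard⟩ := Finset.exists_subset_card_eq hkZ
  -- row and column maps
  let r : Fin k → Fin p := fun i => (T.orderIsoOfFin hTcard i : Fin p)
  let c : Fin k → Fin p := fun i => (S.orderIsoOfFin hk.symm i : Fin p)
  have hr : Function.Injective r := fun a b h => by
    have : (T.orderIsoOfFin hTcard a : T) = T.orderIsoOfFin hTcard b :=
      Subtype.ext h
    exact (T.orderIsoOfFin hTcard).injective this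
  have hc : Function.Injective c := fun a b h => by
    have : (S.orderIsoOfFin hk.symm a : S) = S.orderIsoOfFin hk.symm b :=
      Subtype.ext h
    exact (S.orderIsoOfFin hk.symm).injective this
  have hdet := hM k r c hr hc
  have hmv : (M.submatrix r c).mulVec (g ∘ c) = 0 := by
    funext i
    have hri : r i ∈ Z := hTZ ((T.orderIsoOfFin hTcard i).2)
    have hMgri : M.mulVec g (r i) = 0 := by
      simpa [hZ] using (Finset.mem_filter.mp hri).2
    have hsum : M.mulVec g (r i) = ∑ j ∈ S, M (r i) j * g j := by
      rw [Matrix.mulVec, dotProduct]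
      symm
      apply Finset.sum_subset (Finset.subset_univ S)
      intro x _ hx
      have : g x = 0 := by
        by_contra hgx
        exact hx (by simp [hS, hgx])
      simp [this]
    have hsum2 : ∑ j ∈ S, M (r i) j * g j
        = ∑ i' : Fin k, M (r i) (c i') * g (c i') := by
      rw [← Finset.sum_coe_sort S (fun j => M (r i) j * g j)]
      exact (Fintype.sum_equiv (S.orderIsoOfFin hk.symm).toEquiv _ _
        (fun x => rfl)).symm
    simp only [Matrix.mulVec, dotProduct, Matrix.submatrix_apply,
      Function.comp] at *
    rw [← hsum2, ← hsum, hMgri]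
    rfl
  have hgc0 : g ∘ c = 0 := Matrix.eq_zero_of_mulVec_eq_zero hdet hmv
  have : c ⟨0, hk1⟩ ∈ S := (S.orderIsoOfFin hk.symm ⟨0, hk1⟩).2
  have hne : g (c ⟨0, hk1⟩) ≠ 0 := by
    simpa [hS] using (Finset.mem_filter.mp this).2
  exact hne (congrFun hgc0 ⟨0, hk1⟩)
end

section
/- Let p be an odd prime, r = (p−1)/2, and C = (2cos(2πkj/p))_{k,j=1,...,r}. If det(C_{J×K}) = 0 for some J, K ⊆ {1,...,r} of equal size, then the minor of the p×p complex Fourier matrix F = (exp(2πi·kj/p))_{k,j=−r,...,r} with rows J ∪ (−J) and columns K ∪ (−K) also vanishes. Consequently (by Chebotarev), all minors of C are nonzero. -/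
/-!
Writing `θ_ij = 2π (J_i + 1)(K_j + 1) / p`, the Fourier minor with rows `J ∪ (-J)` and
columns `K ∪ (-K)` is the block matrix `[[E, Ē], [Ē, E]]` with `E = (e^{iθ_ij})`, whose
determinant is `det (E + Ē) · det (E - Ē)`, and `E + Ē` is the cosine minor. The residues
`±(J_i + 1)` (and `±(K_j + 1)`) are distinct mod `p`, so by Chebotarev's theorem the Fourier
minor is nonzero.

Chebotarev's theorem is proved in `ℤ[ζ] = ℤ[X]/(Φ_p)`. If `w` is in the kernel of
`(ζ^{a_i b_j})`, then `Σ_j w_j X^{b_j}` vanishes at the `m` distinct points `ζ^{a_i}`, which are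
all `1` modulo `ζ - 1`; hence its reduction to `𝔽_p[X]` is divisible by `(X - 1)^m`. Its first
`m` derivatives at `1` then form a nonsingular (Vandermonde) system in the reduced `w_j`, so
`ζ - 1 ∣ w_j`. Dividing by `ζ - 1` and repeating puts every `w_j` in `⋂ₙ (ζ - 1)ⁿ = 0` (Krull).
-/

open Complex Matrix

theorem Matrix.det_fromBlocks_self {R n : Type*} [CommRing R] [Fintype n] [DecidableEq n]
    (A B : Matrix n n R) : (fromBlocks A B B A).det = (A + B).det * (A - B).det := by
  have h : fromBlocks 1 0 (-1) 1 * fromBlocks A B B A * fromBlocks 1 0 1 1 =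
      fromBlocks (A + B) B 0 (A - B) := by
    simp only [fromBlocks_multiply, one_mul, zero_mul, neg_mul, mul_one, mul_zero, add_zero,
      zero_add]
    congr 1 <;> abel
  simpa [det_fromBlocks_zero₁₂, det_fromBlocks_zero₂₁] using congrArg det h

theorem Matrix.det_of_sumElim_neg {R M n : Type*} [CommRing R] [Neg M] [Fintype n]
    [DecidableEq n] (g : M → M → R) (hg : ∀ u v, g (-u) (-v) = g u v)
    (hg' : ∀ u v, g (-u) v = g u (-v)) (x y : n → M) :
    (of fun a b => g (Sum.elim x (fun i => -x i) a) (Sum.elim y (fun j => -y j) b)).det =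
      (of fun i j => g (x i) (y j) + g (x i) (-y j)).det *
        (of fun i j => g (x i) (y j) - g (x i) (-y j)).det := by
  set A : Matrix n n R := of fun i j => g (x i) (y j)
  set B : Matrix n n R := of fun i j => g (x i) (-y j)
  have hblocks :
      (of fun a b => g (Sum.elim x (fun i => -x i) a) (Sum.elim y (fun j => -y j) b)) =
        fromBlocks A B B A := by
    ext (i | i) (j | j) <;> simp [A, B, hg, hg']
  rw [hblocks, det_fromBlocks_self]
  rfl

theorem Matrix.det_ne_zero_of_forall_dvd_of_mulVec_eq_zero {A ι : Type*} [CommRing A]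
    [IsDomain A] [IsNoetherianRing A] [Fintype ι] [DecidableEq ι] {π : A} (hπ0 : π ≠ 0)
    (hπ : ¬IsUnit π) (N : Matrix ι ι A) (h : ∀ w, N *ᵥ w = 0 → ∀ j, π ∣ w j) : N.det ≠ 0 := by
  have pow_dvd : ∀ n w, N *ᵥ w = 0 → ∀ j, π ^ n ∣ w j := by
    intro n
    induction n with
    | zero => simp
    | succ n ih =>
      intro w hw j
      choose u hu using h w hw
      rw [show w = π • u from funext hu, mulVec_smul, smul_eq_zero, or_iff_right hπ0] at hw
      rw [hu j, pow_succ']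
      exact mul_dvd_mul_left π (ih u hw j)
  intro hdet
  obtain ⟨w, hw0, hw⟩ := exists_mulVec_eq_zero_iff.mpr hdet
  refine hw0 (funext fun j => show w j = 0 from ?_)
  have krull := Ideal.iInf_pow_eq_bot_of_isDomain (I := Ideal.span {π})
    (by rwa [Ne, Ideal.span_singleton_eq_top])
  rw [← Ideal.mem_bot, ← krull, Submodule.mem_iInf]
  intro n
  rw [Ideal.span_singleton_pow, Ideal.mem_span_singleton]
  exact pow_dvd n w hw j

namespace Polynomial

theorem prod_X_sub_C_dvd_of_isRoot {R ι : Type*} [CommRing R] [IsDomain R] [Fintype ι]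
    {v : ι → R} (hv : Function.Injective v) {Q : R[X]} (hQ : ∀ i, Q.IsRoot (v i)) :
    ∏ i, (X - C (v i)) ∣ Q := by
  rcases eq_or_ne Q 0 with rfl | hQ0
  · exact dvd_zero _
  have hle : Finset.univ.val.map v ≤ Q.roots :=
    (Multiset.le_iff_subset (Finset.univ.nodup.map hv)).mpr fun x hx => by
      obtain ⟨i, -, rfl⟩ := Multiset.mem_map.mp hx
      exact mem_roots'.mpr ⟨hQ0, hQ i⟩
  have := (Multiset.prod_X_sub_C_dvd_iff_le_roots hQ0 _).mpr hle
  rwa [Multiset.map_map] at this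

theorem eq_zero_of_X_sub_one_pow_dvd_sum_s18 {F ι : Type*} [Field F] [Fintype ι]
    {c : ι → F} {d : ι → ℕ} (hd : Function.Injective fun j => (d j : F))
    (h : (X - 1) ^ Fintype.card ι ∣ ∑ j, C (c j) * X ^ d j) : c = 0 := by
  rw [← C_1] at h
  have moments : ∀ t < Fintype.card ι, ∑ j, c j * (descPochhammer F t).eval (d j : F) = 0 := by
    intro t ht
    have hdvd := pow_sub_dvd_iterate_derivative_of_pow_dvd t h
    have hroot := dvd_iff_isRoot.mp ((dvd_pow_self _ (Nat.sub_ne_zero_of_lt ht)).trans hdvd)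
    simp only [descPochhammer_eval_eq_descFactorial, mul_comm (c _)]
    simpa [iterate_derivative_sum, iterate_derivative_C_mul, iterate_derivative_X_pow_eq_smul,
      eval_finsetSum] using hroot
  let e := Fintype.equivFin ι
  have hdet : (Matrix.of fun j t : Fin (Fintype.card ι) =>
      (descPochhammer F t).eval (d (e.symm j) : F)).det ≠ 0 := by
    rw [← Matrix.det_eval_matrixOfPolynomials_eq_det_vandermonde _ _
      (fun t => descPochhammer_natDegree F t) (fun t => monic_descPochhammer F t)]
    exact Matrix.det_vandermonde_ne_zero_iff.mpr (hd.comp e.symm.injective)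
  have hce : c ∘ e.symm = 0 := Matrix.eq_zero_of_vecMul_eq_zero hdet <| by
    ext t
    simpa [Matrix.vecMul, dotProduct, ← e.sum_comp] using moments t t.isLt
  funext j
  simpa using congrFun hce (e j)

end Polynomial

open Polynomial

theorem dvd_of_mulVec_pow_mul_eq_zero {A F ι : Type*} [CommRing A] [IsDomain A] [Field F]
    [Fintype ι] (ψ : A →+* F) {z π : A} (hψz : ψ z = 1) (hker : ∀ x, ψ x = 0 → π ∣ x)
    {α β : ι → ℕ} (hα : Function.Injective fun i => z ^ α i)
    (hβ : Function.Injective fun j => (β j : F)) {w : ι → A}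
    (hw : (of fun i j => z ^ (α i * β j)) *ᵥ w = 0) (j : ι) : π ∣ w j := by
  set Q : A[X] := ∑ j, C (w j) * X ^ β j
  have hroots : ∀ i, Q.IsRoot (z ^ α i) := fun i => by
    have hwi := congrFun hw i
    simp only [mulVec, dotProduct, of_apply, Pi.zero_apply] at hwi
    simp only [Q, IsRoot, eval_finsetSum, eval_mul, eval_C, eval_pow, eval_X, ← pow_mul, ← hwi]
    exact Finset.sum_congr rfl fun j _ => mul_comm _ _
  have hmap := Polynomial.map_dvd ψ (prod_X_sub_C_dvd_of_isRoot hα hroots)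
  simp only [Polynomial.map_prod, Polynomial.map_sub, Polynomial.map_X, Polynomial.map_C,
    Polynomial.map_pow, Polynomial.map_sum, Polynomial.map_mul, map_pow, hψz, one_pow, C_1,
    Finset.prod_const, Finset.card_univ, Q] at hmap
  exact hker _ (congrFun (eq_zero_of_X_sub_one_pow_dvd_sum_s18 hβ hmap) j)

namespace AdjoinRoot

theorem exists_injective_lift_cyclotomic {K : Type*} [Field K] [CharZero K] {n : ℕ} {ζ : K}
    (hζ : IsPrimitiveRoot ζ n) (hn : 0 < n) :
    ∃ φ : AdjoinRoot (cyclotomic n ℤ) →+* K, Function.Injective φ ∧ φ (root _) = ζ := by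
  have hroot : (cyclotomic n ℤ).eval₂ (Int.castRingHom K) ζ = 0 := by
    rw [eval₂_eq_eval_map, map_cyclotomic]
    exact hζ.isRoot_cyclotomic hn
  refine ⟨lift (Int.castRingHom K) ζ hroot, (injective_iff_map_eq_zero _).mpr fun x hx => ?_,
    lift_root hroot⟩
  obtain ⟨g, rfl⟩ := mk_surjective x
  rw [lift_mk] at hx
  rw [mk_eq_zero, cyclotomic_eq_minpoly hζ hn]
  exact minpoly.isIntegrallyClosed_dvd (hζ.isIntegral hn) (by rwa [aeval_def, algebraMap_int_eq])

theorem root_sub_one_dvd_mk_sub_eval_one (f g : ℤ[X]) :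
    root f - 1 ∣ mk f g - ((g.eval 1 : ℤ) : AdjoinRoot f) := by
  simpa using map_dvd (mk f) (X_sub_C_dvd_sub_C_eval (a := 1) (p := g))

theorem exists_cyclotomic_reduction (p : ℕ) [Fact p.Prime] :
    ∃ ψ : AdjoinRoot (cyclotomic p ℤ) →+* ZMod p,
      ψ (root _) = 1 ∧ ∀ x, ψ x = 0 → root (cyclotomic p ℤ) - 1 ∣ x := by
  have hone : (cyclotomic p ℤ).eval₂ (Int.castRingHom (ZMod p)) 1 = 0 := by
    simp [eval₂_at_one, eval_one_cyclotomic_prime]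
  have hp : root (cyclotomic p ℤ) - 1 ∣ (p : AdjoinRoot (cyclotomic p ℤ)) := by
    simpa [eval_one_cyclotomic_prime] using
      root_sub_one_dvd_mk_sub_eval_one (cyclotomic p ℤ) (cyclotomic p ℤ)
  refine ⟨lift (Int.castRingHom _) 1 hone, lift_root hone, fun x hx => ?_⟩
  obtain ⟨g, rfl⟩ := mk_surjective x
  rw [lift_mk, eval₂_at_one] at hx
  obtain ⟨t, ht⟩ := (ZMod.intCast_zmod_eq_zero_iff_dvd _ _).mp hx
  have hg := root_sub_one_dvd_mk_sub_eval_one (cyclotomic p ℤ) g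
  rw [ht, Int.cast_mul, Int.cast_natCast] at hg
  exact (dvd_sub_left (hp.mul_right _)).mp hg

end AdjoinRoot

theorem IsPrimitiveRoot.det_pow_val_mul_ne_zero {K ι : Type*} [Field K] [CharZero K] [Fintype ι]
    [DecidableEq ι] {p : ℕ} [Fact p.Prime] {ζ : K} (hζ : IsPrimitiveRoot ζ p)
    {a b : ι → ZMod p} (ha : Function.Injective a) (hb : Function.Injective b) :
    (of fun i j => ζ ^ (a i * b j).val).det ≠ 0 := by
  have hp : p.Prime := Fact.out
  obtain ⟨φ, hφ, hφz⟩ := AdjoinRoot.exists_injective_lift_cyclotomic hζ hp.pos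
  obtain ⟨ψ, hψz, hker⟩ := AdjoinRoot.exists_cyclotomic_reduction p
  have := hφ.isDomain
  set z := AdjoinRoot.root (cyclotomic p ℤ)
  have hα : Function.Injective fun i => z ^ (a i).val := fun i j hij => by
    have := congrArg φ hij
    simp only [map_pow, hφz] at this
    exact ha <| ZMod.val_injective _ (hζ.pow_inj (ZMod.val_lt _) (ZMod.val_lt _) this)
  have hβ : Function.Injective fun j => ((b j).val : ZMod p) := by simpa using hb
  have hπ0 : z - 1 ≠ 0 := fun h =>
    hζ.ne_one hp.one_lt (by simpa [hφz, sub_eq_zero] using congrArg φ h)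
  have hπ : ¬IsUnit (z - 1) := fun h => by simpa [hψz] using h.map ψ
  have hN := det_ne_zero_of_forall_dvd_of_mulVec_eq_zero hπ0 hπ _ fun w hw =>
    dvd_of_mulVec_pow_mul_eq_zero ψ hψz hker hα hβ hw
  have hφN : φ.mapMatrix (of fun i j => z ^ ((a i).val * (b j).val)) =
      of fun i j => ζ ^ (a i * b j).val := by
    ext i j
    simp [hφz, ZMod.val_mul, ← pow_eq_pow_mod _ hζ.pow_eq_one]
  rw [← hφN, ← RingHom.map_det]
  exact (map_ne_zero_iff φ hφ).mpr hN

theorem Complex.exp_two_pi_I_mul_intCast_div (N : ℕ) [NeZero N] (n : ℤ) :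
    exp (2 * Real.pi * I * n / N) = exp (2 * Real.pi * I / N) ^ (n : ZMod N).val := by
  rw [← ZMod.toCircle_intCast, ZMod.toCircle_apply, ← Complex.exp_nat_mul]
  ring_nf

theorem ZMod.injective_intCast_sumElim_neg {p : ℕ} {ι : Type*} {x : ι → ℤ}
    (hx : Function.Injective x) (hpos : ∀ i, 0 < x i) (hlt : ∀ i, 2 * x i < p) :
    Function.Injective fun a => ((Sum.elim x (fun i => -x i) a : ℤ) : ZMod p) := by
  set s := Sum.elim x (fun i => -x i)
  have hs : Function.Injective s := hx.sumElim (neg_injective.comp hx) fun i j h => by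
    linarith [hpos i, hpos j]
  have hbound : ∀ a, 2 * |s a| < p := by
    rintro (i | i) <;> simp [s, abs_of_pos (hpos i), hlt]
  intro a b h
  rw [ZMod.intCast_eq_intCast_iff_dvd_sub] at h
  have hab : |s b - s a| < p := by
    have := abs_sub (s b) (s a)
    have := hbound a
    have := hbound b
    omega
  exact hs (Int.eq_of_sub_eq_zero (Int.eq_zero_of_abs_lt_dvd h hab)).symm

theorem cosine_matrix_minors_nonzero_general
    (p : ℕ) (hp : p.Prime)
    (r : ℕ) (hr : r = (p - 1) / 2)
    (k : ℕ) (J K : Fin k → Fin r)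
    (hJ : Function.Injective J) (hK : Function.Injective K) :
    ((Matrix.det (fun i j : Fin k =>
        (2 : ℝ) * Real.cos (2 * Real.pi * ((J i : ℕ) + 1) * ((K j : ℕ) + 1) / p)) = 0 →
      Matrix.det (fun a b : Fin k ⊕ Fin k =>
        Complex.exp (2 * Real.pi * Complex.I
          * (Sum.elim (fun i : Fin k => ((J i : ℕ) + 1 : ℤ))
              (fun i : Fin k => -((J i : ℕ) + 1 : ℤ)) a)
          * (Sum.elim (fun j : Fin k => ((K j : ℕ) + 1 : ℤ))
              (fun j : Fin k => -((K j : ℕ) + 1 : ℤ)) b) / p)) = 0)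
      ∧ Matrix.det (fun i j : Fin k =>
        (2 : ℝ) * Real.cos (2 * Real.pi * ((J i : ℕ) + 1) * ((K j : ℕ) + 1) / p)) ≠ 0) := by
  have := Fact.mk hp
  set g : ℤ → ℤ → ℂ := fun u v => exp (2 * Real.pi * I * u * v / p)
  have shift_inj : ∀ L : Fin k → Fin r, Function.Injective L →
      Function.Injective fun a => ((Sum.elim (fun i => ((L i : ℕ) + 1 : ℤ))
        (fun i => -((L i : ℕ) + 1 : ℤ)) a : ℤ) : ZMod p) := fun L hL =>
    ZMod.injective_intCast_sumElim_neg (fun i j h => hL (Fin.ext (by simpa using h)))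
      (fun i => by positivity) (fun i => by have := (L i).isLt; omega)
  have hg : ∀ u v : ℤ, exp (2 * Real.pi * I / p) ^ ((u : ZMod p) * v).val = g u v := by
    intro u v
    rw [← Int.cast_mul, ← exp_two_pi_I_mul_intCast_div, Int.cast_mul]
    simp only [g, mul_assoc]
  have hF := (isPrimitiveRoot_exp p hp.ne_zero).det_pow_val_mul_ne_zero
    (shift_inj J hJ) (shift_inj K hK)
  simp only [hg] at hF
  have hfactor := det_of_sumElim_neg g (fun u v => by simp only [g]; push_cast; ring_nf)
    (fun u v => by simp only [g]; push_cast; ring_nf)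
    (fun i => ((J i : ℕ) + 1 : ℤ)) (fun j => ((K j : ℕ) + 1 : ℤ))
  have hcos : (of fun i j =>
        g ((J i : ℕ) + 1) ((K j : ℕ) + 1) + g ((J i : ℕ) + 1) (-((K j : ℕ) + 1))) =
      ofRealHom.mapMatrix (of fun i j : Fin k =>
        (2 : ℝ) * Real.cos (2 * Real.pi * ((J i : ℕ) + 1) * ((K j : ℕ) + 1) / p)) := by
    ext i j
    simp only [g, of_apply, RingHom.mapMatrix_apply, map_apply, ofRealHom_eq_coe, ofReal_mul,
      ofReal_cos]
    push_cast
    rw [two_cos]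
    ring_nf
  rw [hcos, ← RingHom.map_det] at hfactor
  have hC : _ → _ := fun h =>
    hfactor.trans (mul_eq_zero_of_left ((map_eq_zero_iff _ ofReal_injective).mpr h) _)
  exact ⟨hC, fun h => hF (hC h)⟩

/-- A vanishing minor of the cosine matrix `C = (2cos(2πkj/p))` would force the
corresponding symmetrized minor of the complex Fourier matrix to vanish;
consequently all minors of `C` are nonzero. -/
theorem cosine_matrix_minors_nonzero
    (p : ℕ) (hp : p.Prime) (hodd : Odd p)
    (r : ℕ) (hr : r = (p - 1) / 2)
    (k : ℕ) (J K : Fin k → Fin r)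
    (hJ : Function.Injective J) (hK : Function.Injective K) :
    ((Matrix.det (fun i j : Fin k =>
        (2 : ℝ) * Real.cos (2 * Real.pi * ((J i : ℕ) + 1) * ((K j : ℕ) + 1) / p)) = 0 →
      Matrix.det (fun a b : Fin k ⊕ Fin k =>
        Complex.exp (2 * Real.pi * Complex.I
          * (Sum.elim (fun i : Fin k => ((J i : ℕ) + 1 : ℤ))
              (fun i : Fin k => -((J i : ℕ) + 1 : ℤ)) a)
          * (Sum.elim (fun j : Fin k => ((K j : ℕ) + 1 : ℤ))
              (fun j : Fin k => -((K j : ℕ) + 1 : ℤ)) b) / p)) = 0)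
      ∧ Matrix.det (fun i j : Fin k =>
        (2 : ℝ) * Real.cos (2 * Real.pi * ((J i : ℕ) + 1) * ((K j : ℕ) + 1) / p)) ≠ 0) :=
  cosine_matrix_minors_nonzero_general p hp r hr k J K hJ hK
end

section
/- Let p, q be distinct primes with r = ord_p(q), let P̄ be an irreducible factor of Φ_p over 𝔽_q, and ω = X in 𝔽_q[X]/P̄. For A, B ⊆ {0,...,p−1} of equal size k and s_A = Σ_μ c_μ x^μ, one has in 𝔽_q[X]/P̄: Σ_{l=0}^{r−1} α_{q^l·B}(s_A) = r·m^{(0)}_{A,B} − Σ_{i=1}^{(p−1)/r} m^{(n_i)}_{A,B}·L_{X^{n_i}}, where L_{X^i} denotes the trace coefficient (second-highest coefficient of the minimal polynomial of X^i over 𝔽_q), n_1,...,n_{(p−1)/r} are coset representatives of (𝔽_p)^×/⟨q⟩, and m^{(i)}_{A,B} counts exponents μ with ⟨μ,B⟩ in the coset of i. -/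
/-!
Write `ω` for the root of `P̄` and `ψ x = ω ^ x` for the additive character of `𝔽_p` it
defines. Substituting `x_j ↦ ω ^ (q ^ l * b_j)` sends the monomial `x ^ μ` to
`ψ (q ^ l * ⟨μ, b⟩)`, so the left-hand side is `Σ_μ c_μ Σ_{l<r} ψ (q ^ l * ⟨μ, b⟩)`. The inner
orbit sum is `r` when `p ∣ ⟨μ, b⟩`. Otherwise `⟨μ, b⟩ = n_i q ^ t` for a unique `i`, the orbit sum
is invariant under `x ↦ q x` (as `q ^ r = 1` in `𝔽_p`), and it equals `Σ_{l<r} β ^ (q ^ l)` for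
`β = ω ^ n_i`. Since `ω` has order `p` these `r` Frobenius conjugates are distinct, and since the
`r`-th power of Frobenius fixes `ω`, the field `𝔽_q(ω)` has degree at most `r`; so the conjugates
are all the roots of the minimal polynomial of `β`, and their sum is minus its second coefficient.
-/

open MvPolynomial Polynomial Classical

open Finset Module

theorem Finset.sum_range_add_one_eq_of_eq {M : Type*} [AddCommMonoid M] (f : ℕ → M) {r : ℕ}
    (h : f r = f 0) : ∑ l ∈ range r, f (l + 1) = ∑ l ∈ range r, f l := by
  cases r with
  | zero => simp
  | succ r => rw [sum_range_succ (fun l => f (l + 1)), h, ← sum_range_succ']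

theorem Finset.sum_range_pow_mul_pow_mul {M G : Type*} [AddCommMonoid M] [Monoid G] (f : G → M)
    {g : G} {r : ℕ} (hg : g ^ r = 1) (t : ℕ) (x : G) :
    ∑ l ∈ range r, f (g ^ l * (g ^ t * x)) = ∑ l ∈ range r, f (g ^ l * x) := by
  induction t with
  | zero => simp
  | succ t ih =>
    rw [← ih, ← sum_range_add_one_eq_of_eq (fun l => f (g ^ l * (g ^ t * x))) (by simp [hg])]
    refine sum_congr rfl fun l _ => ?_
    rw [pow_succ' g t, pow_succ g l]
    simp only [mul_assoc]

theorem Finset.sum_range_pow_mul_eq_of_orbit_reps {ι F R : Type*} [Fintype ι]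
    [CommGroupWithZero F] [Semiring R] (f : F → R) {g : F} {r : ℕ} (hg0 : g ≠ 0)
    (hg : g ^ r = 1) {n : ι → F} (hn0 : ∀ i, n i ≠ 0)
    (hn : ∀ x : Fˣ, ∃! i, ∃ l : ℕ, (x : F) = n i * g ^ l) (x : F) :
    ∑ l ∈ range r, f (g ^ l * x)
      = (if x = 0 then r * f 0 else 0)
        + ∑ i, if ∃ l : ℕ, x = n i * g ^ l
            then ∑ l ∈ range r, f (g ^ l * n i) else 0 := by
  by_cases hx : x = 0
  · have hnot (i : ι) : ¬ ∃ l : ℕ, (0 : F) = n i * g ^ l := fun ⟨l, hl⟩ =>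
      mul_ne_zero (hn0 i) (pow_ne_zero l hg0) hl.symm
    simp only [hx, if_pos, hnot, if_false, sum_const_zero, add_zero, mul_zero, sum_const,
      card_range, nsmul_eq_mul]
  · obtain ⟨i₀, ⟨t, ht⟩, huniq⟩ := hn (Units.mk0 x hx)
    have hmem (i : ι) : (∃ l : ℕ, x = n i * g ^ l) ↔ i = i₀ :=
      ⟨huniq i, by rintro rfl; exact ⟨t, ht⟩⟩
    simp only [Units.val_mk0] at ht
    simp only [hx, if_false, zero_add, hmem, sum_ite_eq', mem_univ, if_true]
    rw [ht, mul_comm, sum_range_pow_mul_pow_mul f hg]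

theorem Polynomial.Monic.nextCoeff_eq_neg_sum_of_isRoot {R : Type*} [CommRing R] [IsDomain R]
    {f : R[X]} (hf : f.Monic) {S : Finset R} (hS : ∀ x ∈ S, f.IsRoot x)
    (hcard : f.natDegree ≤ #S) : f.nextCoeff = -∑ x ∈ S, x := by
  have hsub : S.val ≤ f.roots :=
    (Multiset.le_iff_subset S.nodup).2 fun x hx => (mem_roots hf.ne_zero).2 (hS x hx)
  have hroots : f.roots = S.val :=
    (Multiset.eq_of_le_of_card_le hsub ((card_roots' f).trans hcard)).symm
  have hsplit : f.Splits :=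
    splits_iff_card_roots.2 (le_antisymm (card_roots' f) (hroots ▸ hcard))
  rw [hsplit.nextCoeff_eq_neg_sum_roots_of_monic hf, hroots, sum_eq_multiset_sum, Multiset.map_id']

namespace FiniteField

variable {F : Type*} [Field F] [Fintype F]

theorem frobeniusAlgHom_pow_apply {R : Type*} [CommRing R] [Algebra F R] (l : ℕ) (x : R) :
    (frobeniusAlgHom F R ^ l) x = x ^ Fintype.card F ^ l := by
  rw [AlgHom.coe_pow, coe_frobeniusAlgHom, pow_iterate]

theorem sum_range_pow_card_pow_eq_neg_nextCoeff_minpoly {K : Type*} [Field K] [Algebra F K]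
    [FiniteDimensional F K] {x : K} {r : ℕ} (hdim : finrank F K ≤ r)
    (hinj : (Set.Iio r).InjOn fun l => x ^ Fintype.card F ^ l) :
    ∑ l ∈ range r, x ^ Fintype.card F ^ l = -algebraMap F K (minpoly F x).nextCoeff := by
  have hinj' : Set.InjOn (fun l => x ^ Fintype.card F ^ l) (range r) := by rwa [coe_range]
  rw [← sum_image (f := fun y => y) hinj', ← nextCoeff_map (algebraMap F K).injective, eq_comm,
    neg_eq_iff_eq_neg]
  refine ((minpoly.monic (.of_finite F x)).map _).nextCoeff_eq_neg_sum_of_isRoot ?_ ?_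
  · simp only [mem_image]
    rintro _ ⟨l, -, rfl⟩
    rw [IsRoot, eval_map_algebraMap, ← frobeniusAlgHom_pow_apply, aeval_algHom_apply,
      minpoly.aeval, map_zero]
  · rw [natDegree_map, card_image_of_injOn hinj', card_range]
    exact (minpoly.natDegree_le x).trans hdim

end FiniteField

theorem AdjoinRoot.orderOf_root_of_dvd_geom_sum {R : Type*} [CommRing R] {f : R[X]} {p : ℕ}
    [Fact p.Prime] (h : f ∣ ∑ i ∈ range p, Polynomial.X ^ i) (hp : (p : AdjoinRoot f) ≠ 0) :
    orderOf (root f) = p := by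
  have hsum : ∑ i ∈ range p, root f ^ i = 0 := by
    simpa only [map_sum, map_pow, mk_X] using mk_eq_zero.2 h
  refine orderOf_eq_prime ?_ fun h1 => hp ?_
  · rw [← sub_eq_zero, ← geom_sum_mul, hsum, zero_mul]
  · simpa [h1] using hsum

theorem AdjoinRoot.finrank_dvd_of_root_pow_card_pow_eq {F : Type*} [Field F] [Fintype F]
    {f : F[X]} [Fact (Irreducible f)] {r : ℕ} (h : root f ^ Fintype.card F ^ r = root f) :
    finrank F (AdjoinRoot f) ∣ r := by
  have := (powerBasis (Fact.out : Irreducible f).ne_zero).finite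
  have : Finite (AdjoinRoot f) := Module.finite_of_finite F
  rw [← FiniteField.orderOf_frobeniusAlgHom]
  exact orderOf_dvd_of_pow_eq_one (algHom_ext (by rwa [FiniteField.frobeniusAlgHom_pow_apply]))

theorem AdjoinRoot.finrank_le_orderOf_card {F : Type*} [Field F] [Fintype F] {f : F[X]}
    [Fact (Irreducible f)] {p : ℕ} [Fact p.Prime] (h : root f ^ p = 1)
    (hF : (Fintype.card F : ZMod p) ≠ 0) :
    finrank F (AdjoinRoot f) ≤ orderOf (Fintype.card F : ZMod p) := by
  set N := Fintype.card F ^ orderOf (Fintype.card F : ZMod p)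
  have hN : N % p = 1 % p := (ZMod.natCast_eq_natCast_iff' N 1 p).1 <| by
    rw [Nat.cast_pow, pow_orderOf_eq_one, Nat.cast_one]
  refine Nat.le_of_dvd (Nat.pos_of_dvd_of_pos (ZMod.orderOf_dvd_card_sub_one hF)
    (Nat.sub_pos_of_lt (Fact.out : p.Prime).one_lt)) (finrank_dvd_of_root_pow_card_pow_eq ?_)
  rw [pow_eq_pow_mod N h, hN, ← pow_eq_pow_mod 1 h, pow_one]

theorem AddChar.zmodChar_injective {C : Type*} [CommMonoid C] {n : ℕ} [NeZero n] {ζ : C}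
    (hζ : ζ ^ n = 1) (hord : orderOf ζ = n) : Function.Injective (zmodChar n hζ) := by
  intro a b hab
  rw [zmodChar_apply, zmodChar_apply] at hab
  exact ZMod.val_injective n <|
    pow_injOn_Iio_orderOf (hord ▸ a.val_lt : a.val < orderOf ζ) (hord ▸ b.val_lt) hab

theorem AddChar.map_sum_eq_prod {A M ι : Type*} [AddCommMonoid A] [CommMonoid M]
    (ψ : AddChar A M) (s : Finset ι) (v : ι → A) :
    ψ (∑ i ∈ s, v i) = ∏ i ∈ s, ψ (v i) := by
  induction s using Finset.induction_on with
  | empty => simp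
  | insert i s hi ih => rw [sum_insert hi, prod_insert hi, map_add_eq_mul, ih]

theorem MvPolynomial.aeval_addChar {σ R A K : Type*} [Fintype σ] [CommSemiring R]
    [AddCommMonoid A] [CommSemiring K] [Algebra R K] (ψ : AddChar A K) (v : σ → A)
    (s : MvPolynomial σ R) :
    aeval (fun j => ψ (v j)) s
      = ∑ μ ∈ s.support, algebraMap R K (s.coeff μ) * ψ (∑ j, μ j • v j) := by
  rw [aeval_def, eval₂_eq']
  refine sum_congr rfl fun μ _ => ?_
  simp only [AddChar.map_sum_eq_prod, AddChar.map_nsmul_eq_pow]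

theorem MvPolynomial.sum_range_aeval_pow_mod_eq_sum_zmodChar {σ R K : Type*} [Fintype σ]
    [CommSemiring R] [CommSemiring K] [Algebra R K] {p : ℕ} [NeZero p] {ζ : K}
    (hζ : ζ ^ p = 1) (q r : ℕ) (b : σ → ℕ) (s : MvPolynomial σ R) :
    ∑ l ∈ range r, aeval (fun j => ζ ^ ((q ^ l * b j) % p)) s
      = ∑ μ ∈ s.support, algebraMap R K (s.coeff μ) * ∑ l ∈ range r,
          AddChar.zmodChar p hζ
            ((q : ZMod p) ^ l * ((∑ j, (μ j : ℤ) * (b j : ℤ) : ℤ) : ZMod p)) := by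
  have hsubst (l : ℕ) : (fun j => ζ ^ ((q ^ l * b j) % p))
      = fun j => AddChar.zmodChar p hζ ((q : ZMod p) ^ l * b j) := by
    funext j
    rw [← AddChar.zmodChar_apply' hζ, ZMod.natCast_mod, Nat.cast_mul, Nat.cast_pow]
  simp only [hsubst, aeval_addChar, mul_sum]
  rw [sum_comm]
  refine sum_congr rfl fun μ _ => sum_congr rfl fun l _ => ?_
  congr 2
  push_cast
  rw [mul_sum]
  exact sum_congr rfl fun j _ => by ring

theorem AddChar.sum_range_pow_mul_eq_neg_nextCoeff_minpoly {A F K : Type*} [Field A] [Field F]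
    [Fintype F] [Field K] [Algebra F K] [FiniteDimensional F K] {ψ : AddChar A K}
    (hψ : Function.Injective ψ) {x : A} (hx : x ≠ 0)
    (hdim : finrank F K ≤ orderOf (Fintype.card F : A)) :
    ∑ l ∈ range (orderOf (Fintype.card F : A)), ψ ((Fintype.card F : A) ^ l * x)
      = -algebraMap F K (minpoly F (ψ x)).nextCoeff := by
  have hconj (l : ℕ) : ψ ((Fintype.card F : A) ^ l * x) = ψ x ^ Fintype.card F ^ l := by
    rw [← map_nsmul_eq_pow, nsmul_eq_mul, Nat.cast_pow]
  simp only [hconj]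
  refine FiniteField.sum_range_pow_card_pow_eq_neg_nextCoeff_minpoly hdim fun l hl l' hl' h => ?_
  exact pow_injOn_Iio_orderOf hl hl' (mul_right_cancel₀ hx (hψ (by simpa only [hconj] using h)))

theorem AddChar.sum_range_card_pow_mul_eq {A F K ι : Type*} [Field A] [Field F] [Fintype F]
    [Field K] [Algebra F K] [FiniteDimensional F K] [Fintype ι] {ψ : AddChar A K}
    (hψ : Function.Injective ψ) (hF : (Fintype.card F : A) ≠ 0)
    (hdim : finrank F K ≤ orderOf (Fintype.card F : A)) {n : ι → A} (hn0 : ∀ i, n i ≠ 0)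
    (hn : ∀ x : Aˣ, ∃! i, ∃ l : ℕ, (x : A) = n i * (Fintype.card F : A) ^ l) (x : A) :
    ∑ l ∈ range (orderOf (Fintype.card F : A)), ψ ((Fintype.card F : A) ^ l * x)
      = (if x = 0 then (orderOf (Fintype.card F : A) : K) else 0)
        - ∑ i, if ∃ l : ℕ, x = n i * (Fintype.card F : A) ^ l
            then algebraMap F K (minpoly F (ψ (n i))).nextCoeff else 0 := by
  rw [sum_range_pow_mul_eq_of_orbit_reps ψ hF (pow_orderOf_eq_one _) hn0 hn x]
  simp only [sum_range_pow_mul_eq_neg_nextCoeff_minpoly hψ (hn0 _) hdim,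
    AddChar.map_zero_eq_one, mul_one, sub_eq_add_neg, ← sum_neg_distrib]
  congr 1
  exact sum_congr rfl fun i _ => by split_ifs <;> simp

theorem sum_conjugated_schur_substitutions_nonprimitive_general
    (p q r : ℕ) (hpq : p ≠ q)
    [Fact q.Prime] [Fact p.Prime]
    (hr : orderOf (q : ZMod p) = r)
    (Pbar : Polynomial (ZMod q)) (hPirr : Irreducible Pbar)
    (hPdvd : Pbar ∣ ∑ i ∈ Finset.range p, (Polynomial.X : Polynomial (ZMod q)) ^ i)
    -- coset representatives `n 1, ..., n ((p-1)/r)` of `(𝔽_p)^× / ⟨q⟩`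
    (n : Fin ((p - 1) / r) → ℕ)
    (hn0 : ∀ i, ¬ (p : ℤ) ∣ (n i : ℤ))
    (hn : ∀ x : (ZMod p)ˣ, ∃! i : Fin ((p - 1) / r),
        ∃ l : ℕ, (x : ZMod p) = (n i : ZMod p) * (q : ZMod p) ^ l)
    -- the Schur polynomial data
    (k : ℕ) (b : Fin k → ℕ)
    (s : MvPolynomial (Fin k) ℤ)
    -- the counts m⁰ and m^{(n i)}
    (m0 : ℤ)
    (hm0 : m0 = ∑ μ ∈ s.support,
        s.coeff μ * (if (p : ℤ) ∣ (∑ j : Fin k, (μ j : ℤ) * (b j : ℤ)) then 1 else 0))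
    (m : Fin ((p - 1) / r) → ℤ)
    (hm : ∀ i, m i = ∑ μ ∈ s.support,
        s.coeff μ * (if ∃ l : ℕ,
            ((∑ j : Fin k, (μ j : ℤ) * (b j : ℤ) : ℤ) : ZMod p)
              = (n i : ZMod p) * (q : ZMod p) ^ l then 1 else 0))
    -- the traces L_{X^{n i}}
    (L : Fin ((p - 1) / r) → ZMod q)
    (hL : ∀ i, L i = (minpoly (ZMod q) ((AdjoinRoot.root Pbar) ^ (n i))).coeff
        ((minpoly (ZMod q) ((AdjoinRoot.root Pbar) ^ (n i))).natDegree - 1)) :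
    (∑ l ∈ Finset.range r,
        MvPolynomial.aeval
          (fun j : Fin k => (AdjoinRoot.root Pbar) ^ ((q ^ l * b j) % p)) s)
      = ((r * m0 : ℤ) : AdjoinRoot Pbar)
        - ∑ i : Fin ((p - 1) / r),
            ((m i : ℤ) : AdjoinRoot Pbar) * algebraMap (ZMod q) (AdjoinRoot Pbar) (L i) := by
  have : Fact (Irreducible Pbar) := ⟨hPirr⟩
  have := (AdjoinRoot.powerBasis hPirr.ne_zero).finite
  have hq0 : (q : ZMod p) ≠ 0 := by
    rwa [Ne, ZMod.natCast_eq_zero_iff, Nat.prime_dvd_prime_iff_eq Fact.out Fact.out]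
  have hp0 : (p : AdjoinRoot Pbar) ≠ 0 := by
    rw [← map_natCast (algebraMap (ZMod q) _), _root_.map_ne_zero, Ne, ZMod.natCast_eq_zero_iff,
      Nat.prime_dvd_prime_iff_eq Fact.out Fact.out]
    exact hpq.symm
  have hni (i) : (n i : ZMod p) ≠ 0 := by
    rw [Ne, ← Int.cast_natCast, ZMod.intCast_zmod_eq_zero_iff_dvd]
    exact hn0 i
  have hωord := AdjoinRoot.orderOf_root_of_dvd_geom_sum hPdvd hp0
  have hωp : AdjoinRoot.root Pbar ^ p = 1 := hωord ▸ pow_orderOf_eq_one _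
  have horbit := AddChar.sum_range_card_pow_mul_eq (F := ZMod q)
    (AddChar.zmodChar_injective hωp hωord) (by rwa [ZMod.card])
    (by simpa only [ZMod.card] using AdjoinRoot.finrank_le_orderOf_card hωp (by rwa [ZMod.card]))
    hni (by simpa only [ZMod.card] using hn)
  simp only [ZMod.card, hr, AddChar.zmodChar_apply' hωp, nextCoeff_of_natDegree_pos
    (minpoly.natDegree_pos (.of_finite _ _)), ← hL] at horbit
  rw [MvPolynomial.sum_range_aeval_pow_mod_eq_sum_zmodChar hωp]
  simp only [horbit, hm0, hm, eq_intCast, ← ZMod.intCast_zmod_eq_zero_iff_dvd]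
  push_cast [mul_sum, sum_mul]
  rw [sum_comm (s := univ), ← sum_sub_distrib]
  refine sum_congr rfl fun μ _ => ?_
  rw [mul_sub, mul_sum]
  congr 1
  · split_ifs <;> ring
  · exact sum_congr rfl fun i _ => by split_ifs <;> ring

/-- Nonprimitive case: in `𝔽_q[X]/P̄`, with `P̄` an irreducible factor of `Φ_p`
and `ω = X`, one has
`Σ_{l=0}^{r−1} α_{q^l·B}(s_A) = r·m⁰_{A,B} − Σ_i m^{(nᵢ)}_{A,B} · L_{X^{nᵢ}}`. -/
theorem sum_conjugated_schur_substitutions_nonprimitive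
    (p q r : ℕ) (hp : p.Prime) (hq : q.Prime) (hpq : p ≠ q)
    [Fact q.Prime] [Fact p.Prime]
    (hr : orderOf (q : ZMod p) = r)
    (Pbar : Polynomial (ZMod q)) (hPirr : Irreducible Pbar)
    (hPdvd : Pbar ∣ ∑ i ∈ Finset.range p, (Polynomial.X : Polynomial (ZMod q)) ^ i)
    -- coset representatives `n 1, ..., n ((p-1)/r)` of `(𝔽_p)^× / ⟨q⟩`
    (n : Fin ((p - 1) / r) → ℕ)
    (hn0 : ∀ i, ¬ (p : ℤ) ∣ (n i : ℤ))
    (hn : ∀ x : (ZMod p)ˣ, ∃! i : Fin ((p - 1) / r),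
        ∃ l : ℕ, (x : ZMod p) = (n i : ZMod p) * (q : ZMod p) ^ l)
    -- the Schur polynomial data
    (k : ℕ) (a b : Fin k → ℕ)
    (ha : StrictMono a) (hb : StrictMono b)
    (hap : ∀ i, a i < p) (hbp : ∀ i, b i < p)
    (s : MvPolynomial (Fin k) ℤ)
    (hs : Matrix.det (fun i j : Fin k => (MvPolynomial.X j : MvPolynomial (Fin k) ℤ) ^ a i)
        = (∏ w ∈ Finset.univ.filter (fun w : Fin k × Fin k => w.1 < w.2),
            (MvPolynomial.X w.2 - MvPolynomial.X w.1)) * s)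
    -- the counts m⁰ and m^{(n i)}
    (m0 : ℤ)
    (hm0 : m0 = ∑ μ ∈ s.support,
        s.coeff μ * (if (p : ℤ) ∣ (∑ j : Fin k, (μ j : ℤ) * (b j : ℤ)) then 1 else 0))
    (m : Fin ((p - 1) / r) → ℤ)
    (hm : ∀ i, m i = ∑ μ ∈ s.support,
        s.coeff μ * (if ∃ l : ℕ,
            ((∑ j : Fin k, (μ j : ℤ) * (b j : ℤ) : ℤ) : ZMod p)
              = (n i : ZMod p) * (q : ZMod p) ^ l then 1 else 0))
    -- the traces L_{X^{n i}}
    (L : Fin ((p - 1) / r) → ZMod q)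
    (hL : ∀ i, L i = (minpoly (ZMod q) ((AdjoinRoot.root Pbar) ^ (n i))).coeff
        ((minpoly (ZMod q) ((AdjoinRoot.root Pbar) ^ (n i))).natDegree - 1)) :
    (∑ l ∈ Finset.range r,
        MvPolynomial.aeval
          (fun j : Fin k => (AdjoinRoot.root Pbar) ^ ((q ^ l * b j) % p)) s)
      = ((r * m0 : ℤ) : AdjoinRoot Pbar)
        - ∑ i : Fin ((p - 1) / r),
            ((m i : ℤ) : AdjoinRoot Pbar) * algebraMap (ZMod q) (AdjoinRoot Pbar) (L i) :=
  sum_conjugated_schur_substitutions_nonprimitive_general p q r hpq hr Pbar hPirr hPdvd n hn0 hn k b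
    s m0 hm0 m hm L hL
end
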